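/- arXiv:2109.05645 — 6 statements merged into one kernel-verified Lean document; each statement's English description precedes it below -/
import Mathlib

section
/- For every p > 0 and every real x > -1, one has (1+x)^{-p/2} ≥ 1 - (p/2)x + (p(p+2)/9)x² - (p(p+2)(p+4)/72)x³. -/
open Real Set

/-!
Write `(1 + x) ^ (-p/2) = exp (-(p/2) log (1 + x))` and bound `log (1 + x)` from above by a
polynomial `u(x)`, so that `(1 + x) ^ (-p/2) ≥ exp (-(p/2) u(x))`; three regimes remain.
For `x ≤ 0`, `u` is the cubic Taylor polynomial of the logarithm, `-(p/2) u ≥ 0`, and the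
cubic Taylor bound for `exp` has larger coefficients than the claimed minorant.
For `x ≥ 2`, `u = x` and Bernoulli's `exp (-σ) ≥ 1 - σ` already beats the minorant.
For `0 < x < 2`, `u = x - 4x²/9 + 2x³/9` and the Padé bound `exp (-t) ≥ (2 - t)/(2 + t)` reduces
the claim to a polynomial inequality with an explicit sum-of-squares certificate.
-/

noncomputable def cubicMinorant (p x : ℝ) : ℝ :=
  1 - (p / 2) * x + (p * (p + 2) / 9) * x ^ 2 - (p * (p + 2) * (p + 4) / 72) * x ^ 3

lemma le_of_hasDerivAt_nonneg_of_le {f f' : ℝ → ℝ} {a b : ℝ} (hf : ContinuousOn f (Ici a))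
    (hf' : ∀ x, a < x → HasDerivAt f (f' x) x) (hpos : ∀ x, a < x → 0 ≤ f' x) (hab : a ≤ b) :
    f a ≤ f b := by
  refine monotoneOn_of_hasDerivWithinAt_nonneg (f' := f') (convex_Ici a) hf (fun x hx => ?_)
    (fun x hx => ?_) self_mem_Ici hab hab
  · rw [interior_Ici] at hx
    exact (hf' x hx).hasDerivWithinAt
  · rw [interior_Ici] at hx
    exact hpos x hx

lemma two_sub_le_exp_neg_mul_two_add {t : ℝ} (ht : 0 ≤ t) : 2 - t ≤ exp (-t) * (2 + t) := by
  have key := le_of_hasDerivAt_nonneg_of_le (a := 0) (b := t)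
    (f := fun u => exp (-u) * (2 + u) - (2 - u))
    (f' := fun u => 1 - (1 + u) * exp (-u)) (by fun_prop) (fun u _ => ?_) (fun u _ => ?_) ht
  · simp only [neg_zero, exp_zero] at key
    linarith
  · exact ((((hasDerivAt_neg u).exp).mul ((hasDerivAt_id' u).const_add 2)).sub
      ((hasDerivAt_id' u).const_sub 2)).congr_deriv (by ring)
  · have h : (1 + u) * exp (-u) ≤ exp u * exp (-u) := by
      gcongr
      linarith [add_one_le_exp u]
    rw [← exp_add, add_neg_cancel, exp_zero] at h
    linarith

lemma log_one_add_le_of_nonneg {x : ℝ} (hx : 0 ≤ x) :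
    log (1 + x) ≤ x - 4 * x ^ 2 / 9 + 2 * x ^ 3 / 9 := by
  have key := le_of_hasDerivAt_nonneg_of_le (a := 0) (b := x)
    (f := fun u => u - 4 * u ^ 2 / 9 + 2 * u ^ 3 / 9 - log (1 + u))
    (f' := fun u => 1 - 8 * u / 9 + 2 * u ^ 2 / 3 - (1 + u)⁻¹)
    (ContinuousOn.sub (by fun_prop)
      (ContinuousOn.log (by fun_prop) fun u (hu : 0 ≤ u) => by positivity))
    (fun u hu => ?_) (fun u hu => ?_) hx
  · simp only [add_zero, log_one] at key
    linarith
  · have hlog := ((hasDerivAt_id' u).const_add 1).log (by positivity)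
    exact ((((hasDerivAt_id' u).sub (((hasDerivAt_pow 2 u).const_mul 4).div_const 9)).add
      (((hasDerivAt_pow 3 u).const_mul 2).div_const 9)).sub hlog).congr_deriv (by ring)
  · have h1 : 0 < 1 + u := by linarith
    have : 1 - 8 * u / 9 + 2 * u ^ 2 / 3 - (1 + u)⁻¹ =
        u * (6 * u ^ 2 - 2 * u + 1) / (9 * (1 + u)) := by
      field_simp
      ring
    rw [this]
    have : 0 ≤ 6 * u ^ 2 - 2 * u + 1 := by nlinarith [sq_nonneg (6 * u - 1)]
    positivity

lemma log_one_sub_le {y : ℝ} (hy0 : 0 ≤ y) (hy1 : y < 1) :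
    log (1 - y) ≤ -(y + y ^ 2 / 2 + y ^ 3 / 3) := by
  have h := sum_le_hasSum (Finset.range 3) (fun n _ => by positivity)
    (hasSum_pow_div_log_of_abs_lt_one (show |y| < 1 by rwa [abs_of_nonneg hy0]))
  norm_num [Finset.sum_range_succ] at h
  linarith

lemma exp_neg_mul_le_rpow_neg {b c u : ℝ} (hb : 0 < b) (hc : 0 ≤ c) (h : log b ≤ u) :
    exp (-(c * u)) ≤ b ^ (-c) := by
  rw [rpow_def_of_pos hb, exp_le_exp]
  nlinarith

lemma cubicMinorant_le_rpow_of_nonpos {p x : ℝ} (hp : 0 ≤ p) (hx : -1 < x) (hx0 : x ≤ 0) :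
    cubicMinorant p x ≤ (1 + x) ^ (-(p / 2)) := by
  set y := -x
  have hlog : log (1 + x) ≤ -(y + y ^ 2 / 2 + y ^ 3 / 3) := by
    simpa [y, sub_eq_add_neg] using log_one_sub_le (y := y) (by linarith) (by linarith)
  have hy : 0 ≤ y := by linarith
  set σ := p / 2 * (y + y ^ 2 / 2 + y ^ 3 / 3)
  have hexp := sum_le_exp_of_nonneg (show 0 ≤ σ by positivity) 4
  norm_num [Finset.sum_range_succ, Nat.factorial] at hexp
  refine le_trans ?_ (hexp.trans ?_)
  · have h : 0 ≤ 1 + σ + σ ^ 2 / 2 + σ ^ 3 / 6 - cubicMinorant p x := by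
      have : 1 + σ + σ ^ 2 / 2 + σ ^ 3 / 6 - cubicMinorant p x =
          p * y ^ 2 / 36 + p * y ^ 3 / 18
            + p ^ 2 * (y ^ 2 / 72 + y ^ 3 / 24 + 11 * y ^ 4 / 96 + y ^ 5 / 24 + y ^ 6 / 72)
            + p ^ 3 * (y ^ 3 / 144 + y ^ 4 / 32 + 7 * y ^ 5 / 192 + 3 * y ^ 6 / 128
              + 7 * y ^ 7 / 576 + y ^ 8 / 288 + y ^ 9 / 1296) := by
        simp only [σ, y, cubicMinorant]
        ring
      rw [this]
      positivity
    linarith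
  · have := exp_neg_mul_le_rpow_neg (c := p / 2) (by linarith) (by positivity) hlog
    rwa [mul_neg, neg_neg] at this

lemma cubicMinorant_le_rpow_of_two_le {p x : ℝ} (hp : 0 ≤ p) (hx : 2 ≤ x) :
    cubicMinorant p x ≤ (1 + x) ^ (-(p / 2)) := by
  have hbernoulli : 1 - p / 2 * x ≤ (1 + x) ^ (-(p / 2)) := by
    have hlog : log (1 + x) ≤ x := by
      linarith [log_le_sub_one_of_pos (show 0 < 1 + x by linarith)]
    linarith [add_one_le_exp (-(p / 2 * x)),
      exp_neg_mul_le_rpow_neg (c := p / 2) (by linarith) (by positivity) hlog]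
  have hcubic : cubicMinorant p x - (1 - p / 2 * x) =
      -(p * (p + 2) * x ^ 2 * ((p + 4) * x - 8) / 72) := by
    simp only [cubicMinorant]
    ring
  have : 0 ≤ p * (p + 2) * x ^ 2 * ((p + 4) * x - 8) / 72 :=
    div_nonneg (mul_nonneg (by positivity) (by nlinarith)) (by norm_num)
  linarith

lemma cubicMinorant_mul_two_add_le (p : ℝ) {x : ℝ} (hx0 : 0 < x) (hx2 : x < 2) :
    cubicMinorant p x * (2 + p / 2 * (x - 4 * x ^ 2 / 9 + 2 * x ^ 3 / 9)) ≤
      2 - p / 2 * (x - 4 * x ^ 2 / 9 + 2 * x ^ 3 / 9) := by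
  set t := p / 2 * (x - 4 * x ^ 2 / 9 + 2 * x ^ 3 / 9)
  set A := x ^ 2 * (2 * x ^ 2 - 4 * x + 9)
  set E := 756 - 337 * x + 384 * x ^ 2 - 100 * x ^ 3 + 48 * x ^ 4 - 4 * x ^ 5
  have hA : 0 < A := by
    have : 0 < 2 * x ^ 2 - 4 * x + 9 := by nlinarith [sq_nonneg (x - 1)]
    positivity
  have hE : 0 ≤ E := by
    have h1 : 0 ≤ x ^ 4 * (2 - x) := mul_nonneg (by positivity) (by linarith)
    have h2 : 0 ≤ x ^ 2 * (2 - x) := mul_nonneg (by positivity) (by linarith)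
    linarith [sq_nonneg (368 * x - 337), pow_nonneg hx0.le 4]
  -- the difference vanishes to second order in `p`; complete the square in the remaining quadratic
  have hcert : 1296 * A * (2 - t - cubicMinorant p x * (2 + t)) =
      x ^ 2 * p ^ 2 * (A * p + x * (6 * x ^ 3 - 20 * x ^ 2 + 43 * x - 18)) ^ 2
        + x ^ 5 * p ^ 2 * E := by
    simp only [t, A, E, cubicMinorant]
    ring
  have : 0 ≤ 1296 * A * (2 - t - cubicMinorant p x * (2 + t)) := by
    rw [hcert]
    exact add_nonneg (by positivity) (mul_nonneg (by positivity) hE)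
  linarith [nonneg_of_mul_nonneg_right this (by positivity)]

lemma cubicMinorant_le_rpow_of_pos_of_lt_two {p x : ℝ} (hp : 0 ≤ p) (hx0 : 0 < x) (hx2 : x < 2) :
    cubicMinorant p x ≤ (1 + x) ^ (-(p / 2)) := by
  set t := p / 2 * (x - 4 * x ^ 2 / 9 + 2 * x ^ 3 / 9)
  have ht : 0 ≤ t := by
    have : 0 ≤ x - 4 * x ^ 2 / 9 + 2 * x ^ 3 / 9 := by nlinarith [sq_nonneg (x - 1)]
    positivity
  have hexp : exp (-t) ≤ (1 + x) ^ (-(p / 2)) :=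
    exp_neg_mul_le_rpow_neg (by linarith) (by positivity) (log_one_add_le_of_nonneg hx0.le)
  refine le_of_mul_le_mul_right ?_ (show 0 < 2 + t by linarith)
  calc cubicMinorant p x * (2 + t) ≤ 2 - t := cubicMinorant_mul_two_add_le p hx0 hx2
    _ ≤ exp (-t) * (2 + t) := two_sub_le_exp_neg_mul_two_add ht
    _ ≤ (1 + x) ^ (-(p / 2)) * (2 + t) := by gcongr

theorem stmt_0 (p x : ℝ) (hp : 0 < p) (hx : -1 < x) :
    (1 + x) ^ (-(p / 2)) ≥
      1 - (p / 2) * x + (p * (p + 2) / 9) * x ^ 2 - (p * (p + 2) * (p + 4) / 72) * x ^ 3 := by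
  change cubicMinorant p x ≤ _
  rcases le_or_gt x 0 with hx0 | hx0
  · exact cubicMinorant_le_rpow_of_nonpos hp.le hx hx0
  rcases lt_or_ge x 2 with hx2 | hx2
  · exact cubicMinorant_le_rpow_of_pos_of_lt_two hp.le hx0 hx2
  · exact cubicMinorant_le_rpow_of_two_le hp.le hx2
end

section
/- The function ψ(x) = sin(x)/(cos x)^{1/3} is strictly convex on [0, π/2). -/
/-!
Where `cos > 0` we have `ψ = sin · cos^(-1/3)`. Using `sin² = 1 - cos²`, the derivative simplifies
to `ψ' = (cos^(-4/3) + 2 cos^(2/3)) / 3`, hence `ψ'' = (4/9) sin · (cos^(-7/3) - cos^(-1/3))`.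
On `(0, π/2)` we have `sin > 0` and `0 < cos < 1`, so `cos^(-7/3) > cos^(-1/3)` and `ψ'' > 0`.
-/

open Real Set Filter Topology

noncomputable def psi (x : ℝ) : ℝ := sin x / cos x ^ ((1 : ℝ) / 3)

lemma cos_pos_of_mem_Ico {x : ℝ} (hx : x ∈ Ico 0 (π / 2)) : 0 < cos x :=
  cos_pos_of_mem_Ioo ⟨by linarith [hx.1, pi_pos], hx.2⟩

lemma eventually_cos_pos {x : ℝ} (hx : 0 < cos x) : ∀ᶠ y in 𝓝 x, 0 < cos y :=
  continuousAt_const.eventually_lt continuous_cos.continuousAt hx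

lemma hasDerivAt_cos_rpow {x : ℝ} (hx : 0 < cos x) (p : ℝ) :
    HasDerivAt (fun y => cos y ^ p) (-(p * sin x * cos x ^ (p - 1))) x := by
  convert (hasDerivAt_cos x).rpow_const (p := p) (Or.inl hx.ne') using 1
  ring

lemma psi_eventuallyEq {x : ℝ} (hx : 0 < cos x) :
    psi =ᶠ[𝓝 x] fun y => sin y * cos y ^ (-(1 / 3) : ℝ) := by
  filter_upwards [eventually_cos_pos hx] with y hy
  rw [psi, rpow_neg hy.le, div_eq_mul_inv]

lemma hasDerivAt_psi {x : ℝ} (hx : 0 < cos x) :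
    HasDerivAt psi ((cos x ^ (-(4 / 3) : ℝ) + 2 * cos x ^ (2 / 3 : ℝ)) / 3) x := by
  refine (((hasDerivAt_sin x).mul (hasDerivAt_cos_rpow hx (-(1 / 3)))).congr_of_eventuallyEq
    (psi_eventuallyEq hx)).congr_deriv ?_
  have hc := hx.ne'
  have h1 : cos x ^ (-(1 / 3) : ℝ) = cos x ^ (-(4 / 3) : ℝ) * cos x := by
    rw [← rpow_add_one hc]; norm_num
  have h2 : cos x ^ (2 / 3 : ℝ) = cos x ^ (-(4 / 3) : ℝ) * cos x ^ 2 := by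
    rw [sq, ← mul_assoc, ← rpow_add_one hc, ← rpow_add_one hc]; norm_num
  have h3 : cos x ^ (-(1 / 3) - 1 : ℝ) = cos x ^ (-(4 / 3) : ℝ) := by norm_num
  rw [h1, h2, h3]
  linear_combination (cos x ^ (-(4 / 3) : ℝ) / 3) * sin_sq_add_cos_sq x

lemma hasDerivAt_deriv_psi {x : ℝ} (hx : 0 < cos x) :
    HasDerivAt (fun y => (cos y ^ (-(4 / 3) : ℝ) + 2 * cos y ^ (2 / 3 : ℝ)) / 3)
      (4 / 9 * sin x * (cos x ^ (-(7 / 3) : ℝ) - cos x ^ (-(1 / 3) : ℝ))) x := by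
  refine (((hasDerivAt_cos_rpow hx (-(4 / 3))).add
    ((hasDerivAt_cos_rpow hx (2 / 3)).const_mul 2)).div_const 3).congr_deriv ?_
  norm_num
  ring

lemma iterate_deriv_two_psi_pos {x : ℝ} (hx : x ∈ Ioo 0 (π / 2)) : 0 < deriv^[2] psi x := by
  have hcos : 0 < cos x := cos_pos_of_mem_Ico (Ioo_subset_Ico_self hx)
  have hsin : 0 < sin x := sin_pos_of_pos_of_lt_pi hx.1 (by linarith [hx.2, pi_pos])
  have hcos_lt_one : cos x < 1 := by nlinarith [sin_sq_add_cos_sq x]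
  have hderiv : deriv psi =ᶠ[𝓝 x]
      fun y => (cos y ^ (-(4 / 3) : ℝ) + 2 * cos y ^ (2 / 3 : ℝ)) / 3 := by
    filter_upwards [eventually_cos_pos hcos] with y hy
    exact (hasDerivAt_psi hy).deriv
  rw [Function.iterate_succ_apply, Function.iterate_one, hderiv.deriv_eq,
    (hasDerivAt_deriv_psi hcos).deriv]
  have hrpow := rpow_lt_rpow_of_exponent_gt hcos hcos_lt_one
    (show (-(7 / 3) : ℝ) < -(1 / 3) by norm_num)
  exact mul_pos (by positivity) (sub_pos.2 hrpow)

theorem stmt_1 :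
    StrictConvexOn ℝ (Ico (0 : ℝ) (π / 2)) (fun x => Real.sin x / (Real.cos x) ^ ((1 : ℝ) / 3)) := by
  refine strictConvexOn_of_deriv2_pos (f := psi) (convex_Ico _ _) ?_ fun x hx => ?_
  · exact fun x hx => (hasDerivAt_psi (cos_pos_of_mem_Ico hx)).continuousAt.continuousWithinAt
  · rw [interior_Ico] at hx
    exact iterate_deriv_two_psi_pos hx
end

section
/- Let X be a random vector in ℝᵏ with density f such that ‖f‖_∞ = f(0) and f is lower semicontinuous at 0. Let ‖·‖ be a norm on ℝᵏ with closed unit ball K. Then f(0) = lim_{q → k⁻} ((k-q)/(k·vol_k(K)))·E‖X‖^{-q}. -/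
/-!
Polar coordinates for a Haar measure `μ` on an `n`-dimensional normed space give
`∫_{‖x‖ < r} ‖x‖^(-q) dμ = n / (n - q) · μ(B) · r^(n - q)` for `q < n`, so after normalisation
by `(n - q) / (n μ(B))` the weight `‖x‖^(-q)` concentrates at `0` as `q → n⁻`. Lower
semicontinuity gives `c ≤ f` near `0` for every `c < f 0`, hence the lower bound
`c δ^(n - q) → c`; `f ≤ f 0` on the unit ball and `‖x‖^(-q) ≤ 1` outside it give the upper bound
`f 0 + O(n - q)`. A norm `N` on `ℝᵏ` is handled by moving Lebesgue measure to `ℝᵏ` renormed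
by `N`, where it is again a Haar measure.
-/

open MeasureTheory Set Filter Metric Topology Module

section NormedSpace

variable {E : Type*} [NormedAddCommGroup E] [NormedSpace ℝ E] [FiniteDimensional ℝ E]
  [MeasurableSpace E] (μ : Measure E) [μ.IsAddHaarMeasure]

noncomputable def normalizedNegMoment (f : E → ℝ) (q : ℝ) : ℝ :=
  (finrank ℝ E - q) / (finrank ℝ E * μ.real (ball 0 1)) * ∫ x, ‖x‖ ^ (-q) * f x ∂μ

theorem measureReal_unitBall_pos : 0 < μ.real (ball (0 : E) 1) :=
  ENNReal.toReal_pos (measure_ball_pos μ 0 one_pos).ne' measure_ball_lt_top.ne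

variable [BorelSpace E] [Nontrivial E]

theorem integral_ball_norm_rpow_neg {q r : ℝ} (hq : q < finrank ℝ E) (hr : 0 ≤ r) :
    ∫ x in ball 0 r, ‖x‖ ^ (-q) ∂μ
      = finrank ℝ E / (finrank ℝ E - q) * μ.real (ball 0 1) * r ^ (finrank ℝ E - q) := by
  have hn : 1 ≤ finrank ℝ E := finrank_pos
  have hnq : 0 < (finrank ℝ E : ℝ) - q := sub_pos.2 hq
  have hradial : ∫ y in Ioi (0 : ℝ), y ^ (finrank ℝ E - 1) • (Iio r).indicator (· ^ (-q)) y
      = r ^ ((finrank ℝ E : ℝ) - q) / (finrank ℝ E - q) := by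
    rw [show (fun y : ℝ => y ^ (finrank ℝ E - 1) • (Iio r).indicator (· ^ (-q)) y)
        = (Iio r).indicator (fun y => y ^ (finrank ℝ E - 1) * y ^ (-q)) from
      funext fun y => (indicator_smul_apply _ _ _ y).symm, setIntegral_indicator measurableSet_Iio,
      Ioi_inter_Iio, ← integral_Ioc_eq_integral_Ioo, ← intervalIntegral.integral_of_le hr]
    have : ∫ y in (0 : ℝ)..r, y ^ ((finrank ℝ E : ℝ) - q - 1) = _ :=
      integral_rpow (Or.inl (by linarith))
    rw [sub_add_cancel, Real.zero_rpow hnq.ne', sub_zero] at this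
    rw [← this]
    refine intervalIntegral.integral_congr_ae (Eventually.of_forall fun y hy => ?_)
    rw [uIoc_of_le hr] at hy
    rw [← Real.rpow_natCast, ← Real.rpow_add hy.1, Nat.cast_sub hn, Nat.cast_one]
    ring_nf
  calc ∫ x in ball 0 r, ‖x‖ ^ (-q) ∂μ
      = ∫ x, (Iio r).indicator (· ^ (-q)) ‖x‖ ∂μ := by
        rw [← integral_indicator measurableSet_ball]
        congr 1 with x
        simp [indicator]
    _ = _ := by
        rw [integral_fun_norm_addHaar, hradial, nsmul_eq_mul, smul_eq_mul]
        field_simp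

theorem integrableOn_ball_norm_rpow_neg {q : ℝ} (hq : q < finrank ℝ E) (r : ℝ) :
    IntegrableOn (fun x => ‖x‖ ^ (-q)) (ball 0 r) μ :=
  integrableOn_ball_of_norm_le_rpow (C := 1) finrank_pos hq
    (Eventually.of_forall fun x => by simp [Real.abs_rpow_of_nonneg (norm_nonneg x)])
    (measurable_norm.pow_const _).aestronglyMeasurable

variable {μ} {f : E → ℝ}

theorem integrable_norm_rpow_neg_mul (hf_nonneg : ∀ x, 0 ≤ f x) (hf_int : Integrable f μ)
    (hf_max : ∀ x, f x ≤ f 0) {q : ℝ} (hq0 : 0 ≤ q) (hq : q < finrank ℝ E) :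
    Integrable (fun x => ‖x‖ ^ (-q) * f x) μ := by
  have hmeas : AEStronglyMeasurable (fun x => ‖x‖ ^ (-q) * f x) μ :=
    (measurable_norm.pow_const _).aestronglyMeasurable.mul hf_int.aestronglyMeasurable
  rw [← integrableOn_univ, ← union_compl_self (ball (0 : E) 1)]
  refine IntegrableOn.union ?_ ?_
  · refine ((integrableOn_ball_norm_rpow_neg μ hq 1).const_mul (f 0)).mono' hmeas.restrict
      (Eventually.of_forall fun x => ?_)
    rw [norm_mul, Real.norm_of_nonneg (by positivity), Real.norm_of_nonneg (hf_nonneg x), mul_comm]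
    exact mul_le_mul_of_nonneg_right (hf_max x) (by positivity)
  · refine hf_int.integrableOn.mono' hmeas.restrict
      ((ae_restrict_iff' measurableSet_ball.compl).2 (Eventually.of_forall fun x hx => ?_))
    have hx : 1 ≤ ‖x‖ := by simpa using hx
    rw [norm_mul, Real.norm_of_nonneg (by positivity), Real.norm_of_nonneg (hf_nonneg x)]
    exact mul_le_of_le_one_left (hf_nonneg x)
      (Real.rpow_le_one_of_one_le_of_nonpos hx (neg_nonpos.2 hq0))

theorem mul_rpow_le_normalizedNegMoment (hf_nonneg : ∀ x, 0 ≤ f x) {q : ℝ}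
    (hq : q < finrank ℝ E) (hint : Integrable (fun x => ‖x‖ ^ (-q) * f x) μ) {c δ : ℝ}
    (hδ : 0 < δ) (hcf : ∀ x ∈ ball 0 δ, c ≤ f x) :
    c * δ ^ (finrank ℝ E - q) ≤ normalizedNegMoment μ f q := by
  have hnq : 0 < (finrank ℝ E : ℝ) - q := sub_pos.2 hq
  have hV := measureReal_unitBall_pos μ
  have hn : (0 : ℝ) < finrank ℝ E := Nat.cast_pos.2 finrank_pos
  have hmass : c * (finrank ℝ E / (finrank ℝ E - q) * μ.real (ball 0 1)
      * δ ^ (finrank ℝ E - q)) ≤ ∫ x, ‖x‖ ^ (-q) * f x ∂μ :=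
    calc _ = ∫ x in ball 0 δ, c * ‖x‖ ^ (-q) ∂μ := by
          rw [integral_const_mul, integral_ball_norm_rpow_neg μ hq hδ.le]
      _ ≤ ∫ x in ball 0 δ, ‖x‖ ^ (-q) * f x ∂μ :=
          setIntegral_mono_on ((integrableOn_ball_norm_rpow_neg μ hq δ).const_mul c)
            hint.integrableOn measurableSet_ball fun x hx => by
              rw [mul_comm]; exact mul_le_mul_of_nonneg_left (hcf x hx) (by positivity)
      _ ≤ _ := setIntegral_le_integral hint (Eventually.of_forall fun x =>
          mul_nonneg (by positivity) (hf_nonneg x))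
  calc c * δ ^ (finrank ℝ E - q)
      = (finrank ℝ E - q) / (finrank ℝ E * μ.real (ball 0 1))
        * (c * (finrank ℝ E / (finrank ℝ E - q) * μ.real (ball 0 1)
          * δ ^ (finrank ℝ E - q))) := by
        field_simp
    _ ≤ _ := mul_le_mul_of_nonneg_left hmass (by positivity)

theorem normalizedNegMoment_le (hf_nonneg : ∀ x, 0 ≤ f x) (hf_int : Integrable f μ)
    (hf_max : ∀ x, f x ≤ f 0) {q : ℝ} (hq0 : 0 ≤ q) (hq : q < finrank ℝ E) :
    normalizedNegMoment μ f q
      ≤ f 0 + (finrank ℝ E - q) / (finrank ℝ E * μ.real (ball 0 1)) * ∫ x, f x ∂μ := by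
  have hnq : 0 < (finrank ℝ E : ℝ) - q := sub_pos.2 hq
  have hV := measureReal_unitBall_pos μ
  have hn : (0 : ℝ) < finrank ℝ E := Nat.cast_pos.2 finrank_pos
  have hint := integrable_norm_rpow_neg_mul hf_nonneg hf_int hf_max hq0 hq
  have hnear : ∫ x in ball 0 1, ‖x‖ ^ (-q) * f x ∂μ
      ≤ f 0 * (finrank ℝ E / (finrank ℝ E - q) * μ.real (ball 0 1)) := by
    calc ∫ x in ball 0 1, ‖x‖ ^ (-q) * f x ∂μ
        ≤ ∫ x in ball 0 1, f 0 * ‖x‖ ^ (-q) ∂μ :=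
          setIntegral_mono_on hint.integrableOn
            ((integrableOn_ball_norm_rpow_neg μ hq 1).const_mul _) measurableSet_ball
            fun x _ => by
              rw [mul_comm]; exact mul_le_mul_of_nonneg_right (hf_max x) (by positivity)
      _ = _ := by rw [integral_const_mul, integral_ball_norm_rpow_neg μ hq zero_le_one,
          Real.one_rpow, mul_one]
  have hfar : ∫ x in (ball 0 1)ᶜ, ‖x‖ ^ (-q) * f x ∂μ ≤ ∫ x, f x ∂μ :=
    calc ∫ x in (ball 0 1)ᶜ, ‖x‖ ^ (-q) * f x ∂μ ≤ ∫ x in (ball 0 1)ᶜ, f x ∂μ :=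
          setIntegral_mono_on hint.integrableOn hf_int.integrableOn measurableSet_ball.compl
            fun x hx => mul_le_of_le_one_left (hf_nonneg x)
              (Real.rpow_le_one_of_one_le_of_nonpos (by simpa using hx) (by linarith))
      _ ≤ ∫ x, f x ∂μ := setIntegral_le_integral hf_int (Eventually.of_forall hf_nonneg)
  have hsplit : ∫ x, ‖x‖ ^ (-q) * f x ∂μ
      ≤ f 0 * (finrank ℝ E / (finrank ℝ E - q) * μ.real (ball 0 1)) + ∫ x, f x ∂μ := by
    rw [← integral_add_compl measurableSet_ball hint]
    exact add_le_add hnear hfar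
  calc normalizedNegMoment μ f q
      ≤ (finrank ℝ E - q) / (finrank ℝ E * μ.real (ball 0 1))
        * (f 0 * (finrank ℝ E / (finrank ℝ E - q) * μ.real (ball 0 1)) + ∫ x, f x ∂μ) :=
        mul_le_mul_of_nonneg_left hsplit (by positivity)
    _ = _ := by field_simp

theorem tendsto_normalizedNegMoment (hf_nonneg : ∀ x, 0 ≤ f x)
    (hf_int : Integrable f μ) (hf_max : ∀ x, f x ≤ f 0) (hf_lsc : LowerSemicontinuousAt f 0) :
    Tendsto (normalizedNegMoment μ f) (𝓝[<] (finrank ℝ E : ℝ)) (𝓝 (f 0)) := by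
  have hq : ∀ᶠ q : ℝ in 𝓝[<] (finrank ℝ E : ℝ), 0 ≤ q ∧ q < finrank ℝ E := by
    filter_upwards [self_mem_nhdsWithin, eventually_nhdsWithin_of_eventually_nhds
      (eventually_gt_nhds (Nat.cast_pos.2 finrank_pos))] with q hqn hq0 using ⟨hq0.le, hqn⟩
  have hlim {g : ℝ → ℝ} (hg : Continuous g) :
      Tendsto g (𝓝[<] (finrank ℝ E : ℝ)) (𝓝 (g (finrank ℝ E))) :=
    hg.continuousAt.tendsto.mono_left nhdsWithin_le_nhds
  refine tendsto_order.2 ⟨fun l hl => ?_, fun u hu => ?_⟩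
  · obtain ⟨c, hlc, hcf⟩ := exists_between hl
    obtain ⟨δ, hδ, hball⟩ := Metric.eventually_nhds_iff_ball.1 (hf_lsc c hcf)
    have hc := hlim (g := fun q => c * δ ^ ((finrank ℝ E : ℝ) - q)) (continuous_const.mul
      (continuous_const.rpow (continuous_const.sub continuous_id) fun _ => Or.inl hδ.ne'))
    simp only [sub_self, Real.rpow_zero, mul_one] at hc
    filter_upwards [hq, hc.eventually_const_lt hlc] with q ⟨hq0, hqn⟩ hlq
    exact hlq.trans_le (mul_rpow_le_normalizedNegMoment hf_nonneg hqn
      (integrable_norm_rpow_neg_mul hf_nonneg hf_int hf_max hq0 hqn) hδ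
      fun x hx => (hball x hx).le)
  · have hc := hlim (g := fun q => f 0 + (finrank ℝ E - q) / (finrank ℝ E * μ.real (ball 0 1))
      * ∫ x, f x ∂μ) (by fun_prop)
    simp only [sub_self, zero_div, zero_mul, add_zero] at hc
    filter_upwards [hq, hc.eventually_lt_const hu] with q ⟨hq0, hqn⟩ hqu
    exact (normalizedNegMoment_le hf_nonneg hf_int hf_max hq0 hqn).trans_lt hqu

end NormedSpace

section Renormed

variable {V : Type*}

def Renormed (_N : V → ℝ) : Type _ := V

variable [AddCommGroup V] [Module ℝ V] (N : V → ℝ)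

instance : AddCommGroup (Renormed N) := inferInstanceAs (AddCommGroup V)

instance : Module ℝ (Renormed N) := inferInstanceAs (Module ℝ V)

instance : Norm (Renormed N) := ⟨N⟩

variable {N}

theorem Renormed.normedSpaceCore (hN0 : ∀ x, N x = 0 ↔ x = 0)
    (hNhom : ∀ (a : ℝ) x, N (a • x) = |a| * N x) (hNtri : ∀ x y, N (x + y) ≤ N x + N y) :
    NormedSpace.Core ℝ (Renormed N) where
  norm_nonneg := fun x : V => by
    have h := hNtri x (-x)
    rw [← neg_one_smul ℝ x, hNhom, abs_neg, abs_one, one_mul, neg_one_smul, add_neg_cancel,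
      (hN0 0).2 rfl] at h
    show 0 ≤ N x
    linarith
  norm_smul := hNhom
  norm_triangle := hNtri
  norm_eq_zero_iff := hN0

def Renormed.linearEquiv : V ≃ₗ[ℝ] Renormed N := LinearEquiv.refl ℝ V

end Renormed

theorem tendsto_normalizedNegMoment_of_norm {V : Type*} [NormedAddCommGroup V]
    [NormedSpace ℝ V] [FiniteDimensional ℝ V] [Nontrivial V] [MeasurableSpace V] [BorelSpace V]
    (μ : Measure V) [μ.IsAddHaarMeasure] {N : V → ℝ} (hN0 : ∀ x, N x = 0 ↔ x = 0)
    (hNhom : ∀ (a : ℝ) x, N (a • x) = |a| * N x) (hNtri : ∀ x y, N (x + y) ≤ N x + N y)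
    {f : V → ℝ} (hf_nonneg : ∀ x, 0 ≤ f x) (hf_int : Integrable f μ)
    (hf_max : ∀ x, f x ≤ f 0) (hf_lsc : LowerSemicontinuousAt f 0) :
    Tendsto (fun q : ℝ => (finrank ℝ V - q) / (finrank ℝ V * μ.real {x | N x ≤ 1})
        * ∫ x, N x ^ (-q) * f x ∂μ) (𝓝[<] (finrank ℝ V : ℝ)) (𝓝 (f 0)) := by
  let _ := NormedAddCommGroup.ofCore (Renormed.normedSpaceCore hN0 hNhom hNtri)
  let _ := NormedSpace.ofCore (Renormed.normedSpaceCore hN0 hNhom hNtri)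
  let _ : MeasurableSpace (Renormed N) := borel _
  have : BorelSpace (Renormed N) := ⟨rfl⟩
  have : FiniteDimensional ℝ (Renormed N) := (Renormed.linearEquiv (N := N)).finiteDimensional
  have : Nontrivial (Renormed N) := (Renormed.linearEquiv (N := N)).symm.toEquiv.nontrivial
  let e : V ≃L[ℝ] Renormed N := Renormed.linearEquiv.toContinuousLinearEquiv
  let φ := e.toHomeomorph.toMeasurableEquiv
  have : (μ.map φ).IsAddHaarMeasure := e.isAddHaarMeasure_map μ
  have hball : μ.real {x | N x ≤ 1} = (μ.map φ).real (ball 0 1) := by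
    rw [← Measure.addHaar_real_closedBall_eq_addHaar_real_ball, measureReal_def, measureReal_def,
      φ.map_apply]
    congr 2 with x
    exact (mem_closedBall_zero_iff (a := φ x)).symm
  have hint (q : ℝ) :
      ∫ y, ‖y‖ ^ (-q) * f (e.symm y) ∂(μ.map φ) = ∫ x, N x ^ (-q) * f x ∂μ := by
    rw [integral_map_equiv]
    rfl
  have h := tendsto_normalizedNegMoment (μ := μ.map φ) (f := fun y => f (e.symm y))
    (fun y => hf_nonneg _) ((integrable_map_equiv φ _).2 hf_int)
    (fun y => by simpa using hf_max _)
    ((by simpa using hf_lsc : LowerSemicontinuousAt f (e.symm 0)).comp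
      e.symm.continuous.continuousAt)
  unfold normalizedNegMoment at h
  simp only [hint, map_zero, ← Renormed.linearEquiv.finrank_eq] at h
  rw [hball]
  exact h

theorem stmt_7_general (k : ℕ) (hk : 0 < k)
    (N : (Fin k → ℝ) → ℝ)
    (hN0 : ∀ x, N x = 0 ↔ x = 0)
    (hNhom : ∀ (a : ℝ) x, N (a • x) = |a| * N x)
    (hNtri : ∀ x y, N (x + y) ≤ N x + N y)
    (K : Set (Fin k → ℝ)) (hK : K = {x | N x ≤ 1})
    (f : (Fin k → ℝ) → ℝ)
    (hf_nonneg : ∀ x, 0 ≤ f x)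
    (hf_prob : ∫ x, f x = 1)
    (hf_max : ∀ x, f x ≤ f 0)
    (hf_lsc : LowerSemicontinuousAt f 0) :
    Tendsto (fun q : ℝ => ((k - q) / (k * (volume K).toReal)) * ∫ x, (N x) ^ (-q) * f x)
      (nhdsWithin (k : ℝ) (Iio (k : ℝ))) (nhds (f 0)) := by
  have : Nonempty (Fin k) := ⟨⟨0, hk⟩⟩
  have hf_int : Integrable f := .of_integral_ne_zero (by simp [hf_prob])
  have h := tendsto_normalizedNegMoment_of_norm volume hN0 hNhom hNtri hf_nonneg hf_int
    hf_max hf_lsc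
  rw [finrank_fin_fun] at h
  subst hK
  exact h

theorem stmt_7 (k : ℕ) (hk : 0 < k)
    (N : (Fin k → ℝ) → ℝ)
    (hN0 : ∀ x, N x = 0 ↔ x = 0)
    (hNhom : ∀ (a : ℝ) x, N (a • x) = |a| * N x)
    (hNtri : ∀ x y, N (x + y) ≤ N x + N y)
    (K : Set (Fin k → ℝ)) (hK : K = {x | N x ≤ 1})
    (f : (Fin k → ℝ) → ℝ)
    (hf_nonneg : ∀ x, 0 ≤ f x) (hf_meas : Measurable f)
    (hf_prob : ∫ x, f x = 1)
    (hf_max : ∀ x, f x ≤ f 0)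
    (hf_lsc : LowerSemicontinuousAt f 0) :
    Tendsto (fun q : ℝ => ((k - q) / (k * (volume K).toReal)) * ∫ x, (N x) ^ (-q) * f x)
      (nhdsWithin (k : ℝ) (Iio (k : ℝ))) (nhds (f 0)) :=
  stmt_7_general k hk N hN0 hNhom hNtri K hK f hf_nonneg hf_prob hf_max hf_lsc
end

section
/- Let Y be a nonnegative, non-almost-surely-constant random variable, and define Λ(u) = log E e^{-uY} for u ≥ 0. Then Λ is convex, and for any nonnegative reals b₁, ..., bₙ with sum B and L = max bⱼ, one has Σⱼ Λ(bⱼ) ≥ n·Λ(B/n) + c·Σⱼ (bⱼ - B/n)², where c = (1/4)·sup over 0 < α < β < γ of e^{-L(α+γ)}(β-α)² P(Y < α) P(β < Y < γ). -/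
/-!
Write `I u = E e^{-uY}` (`mgf Y P (-u)` below), so `Λ = log I`. Convexity of `Λ` is Hölder's
inequality.

For the quantitative part let `Y'` be an independent copy of `Y` and `w = (u + v) / 2`. Then
`2 (I u I v - I w ^ 2) = E (e^{-(uY + vY')/2} - e^{-(uY' + vY)/2}) ^ 2`, and on the event
`{Y < α, β < Y' < γ}` the integrand is at least `e^{-L(α+γ)} (β - α)² (u - v)² / 4` for
`u, v ∈ [0, L]`, because `x ↦ e^{-x}` has slope at least `e^{-K}` on `(-∞, K]`. As `0 < I ≤ 1`,
`Λ u + Λ v - 2 Λ w ≥ I u I v - I w ^ 2 ≥ c (u - v)² / 2`, i.e. `Λ - c u²` is midpoint convex on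
`[0, L]`. Cauchy's forward–backward induction upgrades midpoint convexity to Jensen's inequality
for `n` points, and the quadratic correction sums to `c ∑ⱼ (bⱼ - B/n)²`.
-/

open MeasureTheory Set
open Real ProbabilityTheory

def MidpointConvexOn (S : Set ℝ) (g : ℝ → ℝ) : Prop :=
  ∀ ⦃u⦄, u ∈ S → ∀ ⦃v⦄, v ∈ S → 2 * g ((u + v) / 2) ≤ g u + g v

section MidpointConvex

variable {S : Set ℝ} {g : ℝ → ℝ} {ι : Type*}

lemma Convex.sum_div_card_mem (hS : Convex ℝ S) {s : Finset ι} (hs : s.Nonempty) {x : ι → ℝ}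
    (hx : ∀ i ∈ s, x i ∈ S) : (∑ i ∈ s, x i) / s.card ∈ S := by
  have hcard : (s.card : ℝ) ≠ 0 := by exact_mod_cast hs.card_pos.ne'
  convert hS.sum_mem (w := fun _ ↦ (s.card : ℝ)⁻¹) (fun _ _ ↦ by positivity)
    (by simp [hcard]) hx using 1
  simp [div_eq_inv_mul, Finset.mul_sum]

lemma MidpointConvexOn.pow_two_mul_le_sum (hg : MidpointConvexOn S g) (hS : Convex ℝ S) (k : ℕ)
    {s : Finset ι} (hs : s.card = 2 ^ k) {x : ι → ℝ} (hx : ∀ i ∈ s, x i ∈ S) :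
    2 ^ k * g ((∑ i ∈ s, x i) / 2 ^ k) ≤ ∑ i ∈ s, g (x i) := by
  induction k generalizing s with
  | zero =>
    obtain ⟨i, rfl⟩ := Finset.card_eq_one.1 hs
    simp
  | succ k ih =>
    classical
    obtain ⟨t, hts, ht⟩ :=
      Finset.exists_subset_card_eq (show 2 ^ k ≤ s.card by rw [hs, pow_succ]; omega)
    have ht' : (s \ t).card = 2 ^ k := by
      rw [Finset.card_sdiff_of_subset hts, hs, ht, pow_succ]; omega
    have hmean : ∀ r ⊆ s, r.card = 2 ^ k → (∑ i ∈ r, x i) / 2 ^ k ∈ S := fun r hr hrk ↦ by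
      simpa [hrk] using hS.sum_div_card_mem (Finset.card_pos.1 (by rw [hrk]; positivity))
        fun i hi ↦ hx i (hr hi)
    have hsplit (F : ι → ℝ) : ∑ i ∈ s, F i = ∑ i ∈ t, F i + ∑ i ∈ s \ t, F i := by
      rw [add_comm, Finset.sum_sdiff hts]
    have hmid := hg (hmean t hts ht) (hmean (s \ t) Finset.sdiff_subset ht')
    have ih₁ := ih ht fun i hi ↦ hx i (hts hi)
    have ih₂ := ih ht' fun i hi ↦ hx i (Finset.sdiff_subset hi)
    calc 2 ^ (k + 1) * g ((∑ i ∈ s, x i) / 2 ^ (k + 1))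
        = 2 ^ k * (2 * g (((∑ i ∈ t, x i) / 2 ^ k + (∑ i ∈ s \ t, x i) / 2 ^ k) / 2)) := by
          rw [hsplit x]; ring_nf
      _ ≤ 2 ^ k * (g ((∑ i ∈ t, x i) / 2 ^ k) + g ((∑ i ∈ s \ t, x i) / 2 ^ k)) := by gcongr
      _ ≤ ∑ i ∈ s, g (x i) := by rw [hsplit fun i ↦ g (x i)]; linarith

lemma MidpointConvexOn.card_mul_le_sum [Fintype ι] [Nonempty ι] (hg : MidpointConvexOn S g)
    (hS : Convex ℝ S) {x : ι → ℝ} (hx : ∀ i, x i ∈ S) :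
    Fintype.card ι * g ((∑ i, x i) / Fintype.card ι) ≤ ∑ i, g (x i) := by
  set N := Fintype.card ι
  set m := (∑ i, x i) / N
  have hN : (N : ℝ) ≠ 0 := by simp [N]
  have hm : m ∈ S := by simpa using hS.sum_div_card_mem Finset.univ_nonempty fun i _ ↦ hx i
  have hpad : ((2 ^ N - N : ℕ) : ℝ) = 2 ^ N - N := by
    push_cast [N.lt_two_pow_self.le]; ring
  -- pad the family with copies of its mean up to `2 ^ N` points
  let y : ι ⊕ Fin (2 ^ N - N) → ℝ := Sum.elim x fun _ ↦ m
  have hcard : (Finset.univ : Finset (ι ⊕ Fin (2 ^ N - N))).card = 2 ^ N := by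
    simp only [Finset.card_univ, Fintype.card_sum, Fintype.card_fin]
    have := N.lt_two_pow_self
    omega
  have hy : ∀ i ∈ Finset.univ, y i ∈ S := by rintro (i | i) - <;> simp [y, hx, hm]
  have hsum_y (G : ℝ → ℝ) : ∑ i, G (y i) = ∑ i, G (x i) + (2 ^ N - N) * G m := by
    simp [y, Fintype.sum_sum_type, hpad]
  have hmean : (∑ i, y i) / 2 ^ N = m := by
    have h := hsum_y id
    simp only [id] at h
    rw [h, div_eq_iff (by positivity)]
    simp only [m]; field_simp; ring
  have h := hg.pow_two_mul_le_sum hS N hcard hy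
  rw [hmean, hsum_y] at h
  linarith

lemma card_mul_add_sum_sq_le_sum [Fintype ι] [Nonempty ι] {f : ℝ → ℝ} {c : ℝ}
    (hf : MidpointConvexOn S fun u ↦ f u - c * u ^ 2) (hS : Convex ℝ S) {x : ι → ℝ}
    (hx : ∀ i, x i ∈ S) :
    Fintype.card ι * f ((∑ i, x i) / Fintype.card ι)
      + c * ∑ i, (x i - (∑ i, x i) / Fintype.card ι) ^ 2 ≤ ∑ i, f (x i) := by
  set N := Fintype.card ι
  set m := (∑ i, x i) / N
  have hN : (N : ℝ) ≠ 0 := by simp [N]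
  have hjensen := hf.card_mul_le_sum hS hx
  have hsq : ∑ i, (x i - m) ^ 2 = ∑ i, x i ^ 2 - N * m ^ 2 := by
    have hsum : ∑ i, x i = N * m := by simp only [m]; field_simp
    simp only [sub_sq, Finset.sum_add_distrib, Finset.sum_sub_distrib, ← Finset.sum_mul,
      ← Finset.mul_sum, hsum, Finset.sum_const, Finset.card_univ, nsmul_eq_mul]
    ring
  rw [Finset.sum_sub_distrib, ← Finset.mul_sum] at hjensen
  rw [hsq]
  linarith

end MidpointConvex

section LagrangeIdentity

variable {α : Type*} [MeasurableSpace α] {μ : Measure α} {f g : α → ℝ}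

lemma sq_mul_sub_mul_eq (a b a' b' : ℝ) :
    (a * b' - b * a') ^ 2 = a ^ 2 * b' ^ 2 + b ^ 2 * a' ^ 2 - 2 * ((a * b) * (a' * b')) := by
  ring

lemma integrable_prod_mul_sub_mul_sq (hf : Integrable (fun x ↦ f x ^ 2) μ)
    (hg : Integrable (fun x ↦ g x ^ 2) μ) (hfg : Integrable (fun x ↦ f x * g x) μ) :
    Integrable (fun z : α × α ↦ (f z.1 * g z.2 - g z.1 * f z.2) ^ 2) (μ.prod μ) := by
  simp_rw [sq_mul_sub_mul_eq]
  exact ((hf.mul_prod hg).add (hg.mul_prod hf)).sub ((hfg.mul_prod hfg).const_mul 2)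

lemma integral_prod_mul_sub_mul_sq [SigmaFinite μ] (hf : Integrable (fun x ↦ f x ^ 2) μ)
    (hg : Integrable (fun x ↦ g x ^ 2) μ) (hfg : Integrable (fun x ↦ f x * g x) μ) :
    ∫ z, (f z.1 * g z.2 - g z.1 * f z.2) ^ 2 ∂μ.prod μ
      = 2 * ((∫ x, f x ^ 2 ∂μ) * (∫ x, g x ^ 2 ∂μ) - (∫ x, f x * g x ∂μ) ^ 2) := by
  have hsum : Integrable (fun z : α × α ↦ f z.1 ^ 2 * g z.2 ^ 2 + g z.1 ^ 2 * f z.2 ^ 2)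
      (μ.prod μ) := (hf.mul_prod hg).add (hg.mul_prod hf)
  simp_rw [sq_mul_sub_mul_eq]
  rw [integral_sub hsum ((hfg.mul_prod hfg).const_mul 2),
    integral_add (hf.mul_prod hg) (hg.mul_prod hf), integral_const_mul,
    integral_prod_mul (fun x ↦ f x ^ 2) (fun x ↦ g x ^ 2),
    integral_prod_mul (fun x ↦ g x ^ 2) (fun x ↦ f x ^ 2),
    integral_prod_mul (fun x ↦ f x * g x) (fun x ↦ f x * g x)]
  ring

end LagrangeIdentity

lemma sq_mul_exp_le_sq_exp_neg_sub_exp_neg {s t K : ℝ} (hs : s ≤ K) (ht : t ≤ K) :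
    (s - t) ^ 2 * exp (-(2 * K)) ≤ (exp (-s) - exp (-t)) ^ 2 := by
  wlog hst : s ≤ t generalizing s t
  · have h := this ht hs (le_of_not_ge hst)
    rwa [← neg_sub s, ← neg_sub (exp (-s)), neg_sq, neg_sq] at h
  have hlin : (t - s) * exp (-K) ≤ exp (-s) - exp (-t) := by
    have h₁ : exp (-s) - exp (-t) = exp (-t) * (exp (t - s) - 1) := by
      rw [mul_sub, ← exp_add]; ring_nf
    have h₂ : t - s ≤ exp (t - s) - 1 := by linarith [add_one_le_exp (t - s)]
    calc (t - s) * exp (-K) ≤ (exp (t - s) - 1) * exp (-t) :=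
          mul_le_mul h₂ (exp_le_exp.2 (by linarith)) (exp_pos _).le (by linarith)
      _ = exp (-s) - exp (-t) := by rw [h₁, mul_comm]
  have hK : exp (-(2 * K)) = exp (-K) ^ 2 := by rw [← exp_nat_mul]; ring_nf
  rw [hK, ← mul_pow, ← neg_sub, neg_mul, neg_sq]
  exact pow_le_pow_left₀ (by have := exp_pos (-K); nlinarith) hlin 2

lemma le_sq_exp_mul_exp_sub_exp_mul_exp {u v L α β γ y₁ y₂ : ℝ} (hu : u ∈ Icc 0 L)
    (hv : v ∈ Icc 0 L) (hα : 0 < α) (hαβ : α < β) (h₁ : y₁ < α) (h₂ : β < y₂) (h₂' : y₂ < γ) :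
    exp (-L * (α + γ)) * (β - α) ^ 2 * (u - v) ^ 2 / 4
      ≤ (exp (-(u / 2) * y₁) * exp (-(v / 2) * y₂)
          - exp (-(v / 2) * y₁) * exp (-(u / 2) * y₂)) ^ 2 := by
  have hK {p q : ℝ} (hp : p ∈ Icc 0 L) (hq : q ∈ Icc 0 L) :
      (p * y₁ + q * y₂) / 2 ≤ L * (α + γ) / 2 := by
    nlinarith [mul_le_mul_of_nonneg_left h₁.le hp.1, mul_le_mul_of_nonneg_left h₂'.le hq.1,
      mul_le_mul_of_nonneg_right hp.2 hα.le, mul_le_mul_of_nonneg_right hq.2 (hα.trans hαβ).le]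
  have hy : (β - α) ^ 2 ≤ (y₁ - y₂) ^ 2 := by nlinarith
  calc exp (-L * (α + γ)) * (β - α) ^ 2 * (u - v) ^ 2 / 4
      ≤ exp (-L * (α + γ)) * (y₁ - y₂) ^ 2 * (u - v) ^ 2 / 4 := by gcongr
    _ = ((u * y₁ + v * y₂) / 2 - (v * y₁ + u * y₂) / 2) ^ 2 * exp (-(2 * (L * (α + γ) / 2))) := by
        ring_nf
    _ ≤ (exp (-((u * y₁ + v * y₂) / 2)) - exp (-((v * y₁ + u * y₂) / 2))) ^ 2 :=
        sq_mul_exp_le_sq_exp_neg_sub_exp_neg (hK hu hv) (hK hv hu)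
    _ = _ := by simp only [← exp_add]; ring_nf

lemma sub_le_log_sub_log {x y : ℝ} (hy : 0 < y) (hyx : y ≤ x) (hx : x ≤ 1) :
    x - y ≤ log x - log y := by
  have hx₀ : 0 < x := hy.trans_le hyx
  have hlog := log_le_sub_one_of_pos (div_pos hy hx₀)
  rw [log_div hy.ne' hx₀.ne'] at hlog
  have h : x - y ≤ (x - y) / x := le_div_self (by linarith) hx₀ hx
  rw [sub_div, div_self hx₀.ne'] at h
  linarith

section Laplace

variable {Ω : Type*} [MeasurableSpace Ω] {P : Measure Ω} {Y : Ω → ℝ}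

lemma integrable_exp_neg_mul [IsFiniteMeasure P] (hYm : AEMeasurable Y P)
    (hY : ∀ᵐ ω ∂P, 0 ≤ Y ω) {u : ℝ} (hu : 0 ≤ u) : Integrable (fun ω ↦ exp (-u * Y ω)) P := by
  refine .of_mem_Icc 0 1 (measurable_exp.comp_aemeasurable (hYm.const_mul _)) ?_
  filter_upwards [hY] with ω hω
  exact ⟨(exp_pos _).le, exp_le_one_iff.2 (by nlinarith)⟩

lemma mgf_neg_pos [IsProbabilityMeasure P] (hYm : AEMeasurable Y P) (hY : ∀ᵐ ω ∂P, 0 ≤ Y ω)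
    {u : ℝ} (hu : 0 ≤ u) : 0 < mgf Y P (-u) :=
  mgf_pos (integrable_exp_neg_mul hYm hY hu)

lemma mgf_neg_le_one [IsProbabilityMeasure P] (hY : ∀ᵐ ω ∂P, 0 ≤ Y ω) {u : ℝ} (hu : 0 ≤ u) :
    mgf Y P (-u) ≤ 1 := by
  calc mgf Y P (-u) ≤ mgf 0 P (-u) := mgf_anti_of_nonpos hY (by linarith) (by simp)
    _ = 1 := by simp [mgf_zero_fun]

lemma convexOn_log_mgf_neg [IsProbabilityMeasure P] (hYm : AEMeasurable Y P)
    (hY : ∀ᵐ ω ∂P, 0 ≤ Y ω) : ConvexOn ℝ (Ici 0) fun u ↦ log (mgf Y P (-u)) := by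
  refine ⟨convex_Ici 0, fun x hx y hy a b ha hb hab ↦ ?_⟩
  rcases ha.eq_or_lt with rfl | ha
  · obtain rfl : b = 1 := by linarith
    simp
  rcases hb.eq_or_lt with rfl | hb
  · obtain rfl : a = 1 := by linarith
    simp
  simp only [smul_eq_mul]
  rw [mem_Ici] at hx hy
  have hmem (t : ℝ) (ht : 0 ≤ t) (p : ℝ) : MemLp (fun ω ↦ exp (-t * Y ω)) (ENNReal.ofReal p) P :=
    .of_bound (integrable_exp_neg_mul hYm hY ht).aestronglyMeasurable 1 <| by
      filter_upwards [hY] with ω hω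
      rw [norm_of_nonneg (exp_pos _).le]
      exact exp_le_one_iff.2 (by nlinarith)
  have hrpow {t s : ℝ} (hs : 0 < s) (ω : Ω) : exp (-(s * t) * Y ω) ^ s⁻¹ = exp (-t * Y ω) := by
    rw [← exp_mul]; congr 1; field_simp
  have holder : mgf Y P (-(a * x + b * y)) ≤ mgf Y P (-x) ^ a * mgf Y P (-y) ^ b := by
    have h := integral_mul_le_Lp_mul_Lq_of_nonneg (Real.HolderConjugate.inv_inv ha hb hab)
      (.of_forall fun ω ↦ (exp_pos _).le) (.of_forall fun ω ↦ (exp_pos _).le)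
      (hmem (a * x) (by positivity) a⁻¹) (hmem (b * y) (by positivity) b⁻¹)
    simp only [hrpow ha, hrpow hb, one_div, inv_inv, ← exp_add] at h
    refine le_of_eq_of_le (integral_congr_ae (.of_forall fun ω ↦ ?_)) h
    beta_reduce
    ring_nf
  have hx₀ := mgf_neg_pos hYm hY hx
  have hy₀ := mgf_neg_pos hYm hY hy
  calc log (mgf Y P (-(a * x + b * y))) ≤ log (mgf Y P (-x) ^ a * mgf Y P (-y) ^ b) :=
        log_le_log (mgf_neg_pos hYm hY (by positivity)) holder
    _ = a * log (mgf Y P (-x)) + b * log (mgf Y P (-y)) := by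
        rw [log_mul (by positivity) (by positivity), log_rpow hx₀, log_rpow hy₀]

lemma mul_sq_le_mgf_mul_mgf_sub_sq [IsProbabilityMeasure P] (hYm : AEMeasurable Y P)
    (hY : ∀ᵐ ω ∂P, 0 ≤ Y ω) {u v L α β γ : ℝ} (hu : u ∈ Icc 0 L) (hv : v ∈ Icc 0 L)
    (hα : 0 < α) (hαβ : α < β) :
    exp (-L * (α + γ)) * (β - α) ^ 2 * (P {ω | Y ω < α}).toReal *
        (P {ω | β < Y ω ∧ Y ω < γ}).toReal * (u - v) ^ 2
      ≤ 8 * (mgf Y P (-u) * mgf Y P (-v) - mgf Y P (-((u + v) / 2)) ^ 2) := by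
  set f : Ω → ℝ := fun ω ↦ exp (-(u / 2) * Y ω)
  set g : Ω → ℝ := fun ω ↦ exp (-(v / 2) * Y ω)
  have hf (ω : Ω) : f ω ^ 2 = exp (-u * Y ω) := by rw [← exp_nat_mul]; ring_nf
  have hg (ω : Ω) : g ω ^ 2 = exp (-v * Y ω) := by rw [← exp_nat_mul]; ring_nf
  have hfg (ω : Ω) : f ω * g ω = exp (-((u + v) / 2) * Y ω) := by rw [← exp_add]; ring_nf
  have hw : 0 ≤ (u + v) / 2 := by linarith [hu.1, hv.1]
  have hf_int : Integrable (fun ω ↦ f ω ^ 2) P := by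
    simpa only [hf] using integrable_exp_neg_mul hYm hY hu.1
  have hg_int : Integrable (fun ω ↦ g ω ^ 2) P := by
    simpa only [hg] using integrable_exp_neg_mul hYm hY hv.1
  have hfg_int : Integrable (fun ω ↦ f ω * g ω) P := by
    simpa only [hfg] using integrable_exp_neg_mul hYm hY hw
  have hid := integral_prod_mul_sub_mul_sq hf_int hg_int hfg_int
  simp only [hf, hg, hfg] at hid
  set κ := exp (-L * (α + γ)) * (β - α) ^ 2 * (u - v) ^ 2 / 4 with hκ_def
  have hsub : {ω | Y ω < α} ×ˢ {ω | β < Y ω ∧ Y ω < γ}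
      ⊆ {z : Ω × Ω | κ ≤ (f z.1 * g z.2 - g z.1 * f z.2) ^ 2} := by
    rintro z ⟨h₁, h₂, h₂'⟩
    exact le_sq_exp_mul_exp_sub_exp_mul_exp hu hv hα hαβ h₁ h₂ h₂'
  have hmarkov := mul_meas_ge_le_integral_of_nonneg (.of_forall fun _ ↦ sq_nonneg _)
    (integrable_prod_mul_sub_mul_sq hf_int hg_int hfg_int) κ
  have hmono := mul_le_mul_of_nonneg_left (measureReal_mono (μ := P.prod P) hsub)
    (by positivity : 0 ≤ κ)
  rw [hid] at hmarkov
  rw [measureReal_prod_prod] at hmono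
  have hκ_mul : κ * (P.real {ω | Y ω < α} * P.real {ω | β < Y ω ∧ Y ω < γ})
      = exp (-L * (α + γ)) * (β - α) ^ 2 * P.real {ω | Y ω < α} *
          P.real {ω | β < Y ω ∧ Y ω < γ} * (u - v) ^ 2 / 4 := by
    rw [hκ_def]; ring
  simp only [mgf, ← measureReal_def]
  linarith

def strongConvexityBounds (P : Measure Ω) (Y : Ω → ℝ) (L : ℝ) : Set ℝ :=
  {x : ℝ | ∃ α β γ : ℝ, 0 < α ∧ α < β ∧ β < γ ∧
    x = Real.exp (-L * (α + γ)) * (β - α) ^ 2 * (P {ω | Y ω < α}).toReal *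
      (P {ω | β < Y ω ∧ Y ω < γ}).toReal}

noncomputable def strongConvexityConstant (P : Measure Ω) (Y : Ω → ℝ) (L : ℝ) : ℝ :=
  1 / 4 * sSup (strongConvexityBounds P Y L)

lemma strongConvexityConstant_nonneg (L : ℝ) : 0 ≤ strongConvexityConstant P Y L := by
  refine mul_nonneg (by norm_num) (Real.sSup_nonneg ?_)
  rintro x ⟨α, β, γ, hα, hαβ, hβγ, rfl⟩
  positivity

lemma strongConvexityConstant_mul_sq_le [IsProbabilityMeasure P] (hYm : AEMeasurable Y P)
    (hY : ∀ᵐ ω ∂P, 0 ≤ Y ω) {u v L : ℝ} (hu : u ∈ Icc 0 L) (hv : v ∈ Icc 0 L) :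
    strongConvexityConstant P Y L * (u - v) ^ 2
      ≤ 2 * (mgf Y P (-u) * mgf Y P (-v) - mgf Y P (-((u + v) / 2)) ^ 2) := by
  rcases eq_or_ne u v with rfl | huv
  · simp [sq]
  have hpos : 0 < (u - v) ^ 2 := by have := sub_ne_zero.2 huv; positivity
  have hsup : sSup (strongConvexityBounds P Y L)
      ≤ 8 * (mgf Y P (-u) * mgf Y P (-v) - mgf Y P (-((u + v) / 2)) ^ 2) / (u - v) ^ 2 := by
    refine csSup_le ⟨_, 1, 2, 3, by norm_num, by norm_num, by norm_num, rfl⟩ ?_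
    rintro x ⟨α, β, γ, hα, hαβ, -, rfl⟩
    exact (le_div_iff₀ hpos).2 (mul_sq_le_mgf_mul_mgf_sub_sq hYm hY hu hv hα hαβ)
  rw [le_div_iff₀ hpos] at hsup
  unfold strongConvexityConstant
  linarith

lemma midpointConvexOn_log_mgf_neg_sub [IsProbabilityMeasure P] (hYm : AEMeasurable Y P)
    (hY : ∀ᵐ ω ∂P, 0 ≤ Y ω) (L : ℝ) :
    MidpointConvexOn (Icc 0 L)
      fun u ↦ log (mgf Y P (-u)) - strongConvexityConstant P Y L * u ^ 2 := by
  intro u hu v hv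
  have hw : 0 ≤ (u + v) / 2 := by linarith [hu.1, hv.1]
  have hc := strongConvexityConstant_nonneg (P := P) (Y := Y) L
  have hgap := strongConvexityConstant_mul_sq_le hYm hY hu hv
  have hu₀ := mgf_neg_pos hYm hY hu.1
  have hv₀ := mgf_neg_pos hYm hY hv.1
  have hlog := sub_le_log_sub_log (pow_pos (mgf_neg_pos hYm hY hw) 2)
    (by linarith [mul_nonneg hc (sq_nonneg (u - v))])
    (mul_le_one₀ (mgf_neg_le_one hY hu.1) hv₀.le (mgf_neg_le_one hY hv.1))
  rw [log_mul hu₀.ne' hv₀.ne', log_pow] at hlog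
  push_cast at hlog
  linarith

end Laplace

theorem stmt_13_general
    {Ω : Type*} [MeasurableSpace Ω] (P : Measure Ω) [IsProbabilityMeasure P]
    (Y : Ω → ℝ) (hYm : Measurable Y)
    (hYnn : ∀ᵐ ω ∂P, 0 ≤ Y ω)
    (Λ : ℝ → ℝ) (hΛ : ∀ u, Λ u = Real.log (∫ ω, Real.exp (-u * Y ω) ∂P))
    (n : ℕ) (b : Fin n → ℝ) (hb : ∀ j, 0 ≤ b j)
    (B L : ℝ) (hB : B = ∑ j, b j) (hL : IsGreatest (Set.range b) L)
    (c : ℝ)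
    (hc : c = (1 / 4) * sSup {x : ℝ | ∃ α β γ : ℝ, 0 < α ∧ α < β ∧ β < γ ∧
      x = Real.exp (-L * (α + γ)) * (β - α) ^ 2 * (P {ω | Y ω < α}).toReal *
        (P {ω | β < Y ω ∧ Y ω < γ}).toReal}) :
    ConvexOn ℝ (Ici (0 : ℝ)) Λ ∧
    ∑ j, Λ (b j) ≥ n * Λ (B / n) + c * ∑ j, (b j - B / n) ^ 2 := by
  obtain rfl : Λ = fun u ↦ log (mgf Y P (-u)) := funext hΛ
  obtain rfl : c = strongConvexityConstant P Y L := hc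
  obtain ⟨⟨j, -⟩, hLmax⟩ := hL
  have : Nonempty (Fin n) := ⟨j⟩
  refine ⟨convexOn_log_mgf_neg hYm.aemeasurable hYnn, ?_⟩
  have h := card_mul_add_sum_sq_le_sum (midpointConvexOn_log_mgf_neg_sub hYm.aemeasurable hYnn L)
    (convex_Icc 0 L) fun j ↦ ⟨hb j, hLmax ⟨j, rfl⟩⟩
  rw [Fintype.card_fin, ← hB] at h
  exact h

theorem stmt_13
    {Ω : Type*} [MeasurableSpace Ω] (P : Measure Ω) [IsProbabilityMeasure P]
    (Y : Ω → ℝ) (hYm : Measurable Y)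
    (hYnn : ∀ᵐ ω ∂P, 0 ≤ Y ω)
    (hYnc : ¬ ∃ c : ℝ, ∀ᵐ ω ∂P, Y ω = c)
    (Λ : ℝ → ℝ) (hΛ : ∀ u, Λ u = Real.log (∫ ω, Real.exp (-u * Y ω) ∂P))
    (n : ℕ) (hn : 1 ≤ n) (b : Fin n → ℝ) (hb : ∀ j, 0 ≤ b j)
    (B L : ℝ) (hB : B = ∑ j, b j) (hL : IsGreatest (Set.range b) L)
    (c : ℝ)
    (hc : c = (1 / 4) * sSup {x : ℝ | ∃ α β γ : ℝ, 0 < α ∧ α < β ∧ β < γ ∧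
      x = Real.exp (-L * (α + γ)) * (β - α) ^ 2 * (P {ω | Y ω < α}).toReal *
        (P {ω | β < Y ω ∧ Y ω < γ}).toReal}) :
    ConvexOn ℝ (Ici (0 : ℝ)) Λ ∧
    ∑ j, Λ (b j) ≥ n * Λ (B / n) + c * ∑ j, (b j - B / n) ^ 2 :=
  stmt_13_general P Y hYm hYnn Λ hΛ n b hb B L hB hL c hc
end

section
/- Let q > 0 and Y₁, ..., Yₙ be i.i.d. copies of a nonnegative, non-constant random variable Y with E Y < ∞. Then there is a constant c > 0, depending only on q and the distribution of Y, such that for all b₁, ..., bₙ ≥ 0 with Σbⱼ = 1, E(Σⱼ bⱼYⱼ)^{-q} ≥ E(Σⱼ Yⱼ/n)^{-q} + c·Σⱼ (bⱼ - 1/n)². -/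
/-!
Write `E W^{-q} Γ(q) = ∫₀^∞ t^{q-1} E e^{-tW} dt`. For `W = ∑ bⱼ Yⱼ` the Laplace transform
factorises as `∏ φ(t bⱼ)`, where `log φ(t) = cgf Y (-t)`. The second derivative of the cgf at
`v ≤ 0` is the variance of the law of `Y` tilted by `e^{vY}`; since `Y` is not a.s. constant it
is bounded below by `κ e^{-Mt}` on `[-t, 0]`, i.e. the cgf is strongly convex there. Jensen's
inequality for a strongly convex function, together with `φ(t/n)^n ≥ e^{-t E Y}`, gives
`∏ φ(t bⱼ) ≥ φ(t/n)^n + κ t² e^{-βt} ∑ (bⱼ - 1/n)²`, and integrating against `t^{q-1}`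
produces the gap `κ Γ(q+2) / (Γ(q) β^{q+2}) · ∑ (bⱼ - 1/n)²`.
-/

open MeasureTheory ProbabilityTheory Real Set Filter

lemma Finset.sum_sub_const_sq {ι : Type*} (s : Finset ι) (x : ι → ℝ) (a : ℝ) :
    ∑ i ∈ s, (x i - a) ^ 2 = ∑ i ∈ s, x i ^ 2 - 2 * a * ∑ i ∈ s, x i + s.card * a ^ 2 := by
  simp only [sub_sq, Finset.sum_add_distrib, Finset.sum_sub_distrib, ← Finset.sum_mul,
    ← Finset.mul_sum, Finset.sum_const, nsmul_eq_mul]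
  ring

lemma StrongConvexOn.card_mul_map_mean_add_le_sum {ι : Type*} [Fintype ι] [Nonempty ι]
    {s : Set ℝ} {m : ℝ} {f : ℝ → ℝ} (hf : StrongConvexOn s m f) {x : ι → ℝ}
    (hx : ∀ i, x i ∈ s) :
    Fintype.card ι * f ((∑ i, x i) / Fintype.card ι)
      + m / 2 * ∑ i, (x i - (∑ i, x i) / Fintype.card ι) ^ 2 ≤ ∑ i, f (x i) := by
  rw [Finset.sum_sub_const_sq, Finset.card_univ]
  set N : ℝ := (Fintype.card ι : ℝ)
  have hN : 0 < N := Nat.cast_pos.2 Fintype.card_pos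
  rw [strongConvexOn_iff_convex] at hf
  have hJensen := hf.map_sum_le (t := Finset.univ) (w := fun _ => N⁻¹) (p := x)
    (fun _ _ => inv_nonneg.2 hN.le) (by simp [N, hN.ne']) (fun i _ => hx i)
  simp only [Real.norm_eq_abs, sq_abs, smul_eq_mul, ← Finset.mul_sum] at hJensen
  rw [Finset.sum_sub_distrib, ← Finset.mul_sum, inv_mul_eq_div] at hJensen
  have := mul_le_mul_of_nonneg_left hJensen (sq_nonneg N)
  field_simp at this ⊢
  linarith

lemma exp_add_exp_mul_le_exp_add {K u δ : ℝ} (hu : u ≤ K) (hδ : 0 ≤ δ) :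
    exp K + exp u * δ ≤ exp (K + δ) :=
  calc exp K + exp u * δ ≤ exp K * (1 + δ) := by
        nlinarith [mul_le_mul_of_nonneg_right (exp_le_exp.2 hu) hδ]
    _ ≤ exp K * exp δ := by gcongr; linarith [add_one_le_exp δ]
    _ = exp (K + δ) := (exp_add K δ).symm

lemma integrableOn_rpow_mul_exp_neg_mul {s r : ℝ} (hs : -1 < s) (hr : 0 < r) :
    IntegrableOn (fun t : ℝ => t ^ s * exp (-(r * t))) (Ioi 0) :=
  (integrableOn_rpow_mul_exp_neg_mul_rpow hs zero_lt_one hr).congr_fun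
    (fun t _ => by simp [Real.rpow_one]) measurableSet_Ioi

lemma ofReal_rpow_neg_mul_Gamma {q x : ℝ} (hq : 0 < q) (hx : 0 ≤ x) :
    ENNReal.ofReal x ^ (-q) * ENNReal.ofReal (Gamma q)
      = ∫⁻ t in Ioi 0, ENNReal.ofReal (t ^ (q - 1) * exp (-(x * t))) := by
  rcases hx.eq_or_lt with rfl | hx
  · have hinf : ∫⁻ t in Ioi (0 : ℝ), ENNReal.ofReal (t ^ (q - 1)) = ⊤ := by
      by_contra h
      refine not_integrableOn_Ioi_rpow (q - 1) ((lintegral_ofReal_ne_top_iff_integrable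
        (by fun_prop) ?_).1 h)
      exact ae_restrict_of_forall_mem measurableSet_Ioi fun t (ht : 0 < t) => by positivity
    simp [ENNReal.zero_rpow_of_neg (neg_neg_of_pos hq), Gamma_pos_of_pos hq, hinf]
  · rw [← ofReal_integral_eq_lintegral_ofReal (integrableOn_rpow_mul_exp_neg_mul (by linarith) hx)
      (ae_restrict_of_forall_mem measurableSet_Ioi fun t (ht : 0 < t) => by positivity),
      integral_rpow_mul_exp_neg_mul_Ioi hq hx, ENNReal.ofReal_rpow_of_pos hx,
      ← ENNReal.ofReal_mul (by positivity), one_div, inv_rpow hx.le, rpow_neg hx.le]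

lemma ProbabilityTheory.iIndepFun.mgf_sum_mul {Ω ι : Type*} [MeasurableSpace Ω] {P : Measure Ω}
    {X : ι → Ω → ℝ} (h : iIndepFun X P) (hX : ∀ i, Measurable (X i)) (a : ι → ℝ)
    (s : Finset ι) (t : ℝ) :
    mgf (fun ω => ∑ i ∈ s, a i * X i ω) P t = ∏ i ∈ s, mgf (X i) P (a i * t) := by
  have hindep : iIndepFun (fun i ω => a i * X i ω) P :=
    h.comp (fun i x => a i * x) fun i => measurable_const_mul (a i)
  have hsum := hindep.mgf_sum (fun i => (hX i).const_mul (a i)) s (t := t)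
  simp only [mgf_const_mul] at hsum
  rw [← hsum]
  congr 1
  ext ω
  simp

lemma preimage_ball_subset_setOf_abs_sub_ge {Ω : Type*} {X : Ω → ℝ} {z d ε R : ℝ} (hz : |z| ≤ R)
    (hzd : 2 * ε ≤ |z - d|) :
    X ⁻¹' Metric.ball z ε ⊆ {ω | ε ≤ |X ω - d| ∧ X ω ≤ R + ε} := by
  intro ω hω
  rw [mem_preimage, Metric.mem_ball, Real.dist_eq] at hω
  have htri := abs_sub_le z (X ω) d
  rw [abs_sub_comm z (X ω)] at htri
  exact ⟨by linarith, by linarith [le_abs_self (X ω - z), le_abs_self z]⟩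

section Spread

variable {Ω : Type*} [MeasurableSpace Ω] {P : Measure Ω} {X : Ω → ℝ}

lemma exists_ne_mem_support_map [IsProbabilityMeasure P] (hX : AEMeasurable X P)
    (hnc : ¬ ∃ c : ℝ, ∀ᵐ ω ∂P, X ω = c) :
    ∃ x y, x ≠ y ∧ x ∈ (P.map X).support ∧ y ∈ (P.map X).support := by
  have : IsProbabilityMeasure (P.map X) := Measure.isProbabilityMeasure_map hX
  obtain ⟨x, hx⟩ := Measure.nonempty_support (IsProbabilityMeasure.ne_zero (P.map X))
  by_contra! h
  refine hnc ⟨x, ae_of_ae_map (p := fun y => y = x) hX ?_⟩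
  filter_upwards [Measure.support_mem_ae (μ := P.map X)] with y hy
  by_contra hyx
  exact h y x hyx hy hx

lemma exists_forall_le_measureReal_abs_sub_ge [IsProbabilityMeasure P] (hX : Measurable X)
    (hnc : ¬ ∃ c : ℝ, ∀ᵐ ω ∂P, X ω = c) :
    ∃ ε M p : ℝ, 0 < ε ∧ 0 < M ∧ 0 < p ∧
      ∀ d, p ≤ P.real {ω | ε ≤ |X ω - d| ∧ X ω ≤ M} := by
  obtain ⟨x, y, hxy, hx, hy⟩ := exists_ne_mem_support_map hX.aemeasurable hnc
  set ε := |x - y| / 4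
  have hε : 0 < ε := by positivity [sub_ne_zero.2 hxy]
  have hball_pos : ∀ z ∈ (P.map X).support, 0 < P.real (X ⁻¹' Metric.ball z ε) := fun z hz => by
    rw [measureReal_def, ← Measure.map_apply hX measurableSet_ball]
    exact ENNReal.toReal_pos ((Measure.mem_support_iff_forall z).1 hz _
      (Metric.ball_mem_nhds z hε)).ne' (measure_ne_top _ _)
  refine ⟨ε, max |x| |y| + ε, min (P.real (X ⁻¹' Metric.ball x ε)) (P.real (X ⁻¹' Metric.ball y ε)),
    hε, by positivity, lt_min (hball_pos x hx) (hball_pos y hy), fun d => ?_⟩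
  by_cases hxd : 2 * ε ≤ |x - d|
  · exact (min_le_left _ _).trans (measureReal_mono
      (preimage_ball_subset_setOf_abs_sub_ge (le_max_left _ _) hxd))
  · have hyd : 2 * ε ≤ |y - d| := by
      have := abs_sub_le x d y
      rw [abs_sub_comm d y] at this
      have : |x - y| = 4 * ε := by simp only [ε]; ring
      linarith
    exact (min_le_right _ _).trans (measureReal_mono
      (preimage_ball_subset_setOf_abs_sub_ge (le_max_right _ _) hyd))

end Spread

section NonnegLaplace

variable {Ω : Type*} [MeasurableSpace Ω] {P : Measure Ω} {X : Ω → ℝ}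

lemma integrable_exp_mul_of_nonpos [IsFiniteMeasure P] (hX : AEMeasurable X P)
    (hnn : ∀ᵐ ω ∂P, 0 ≤ X ω) {v : ℝ} (hv : v ≤ 0) :
    Integrable (fun ω => exp (v * X ω)) P := by
  refine Integrable.mono' (integrable_const 1) (by fun_prop) ?_
  filter_upwards [hnn] with ω h
  rw [Real.norm_eq_abs, abs_of_pos (exp_pos _), exp_le_one_iff]
  exact mul_nonpos_of_nonpos_of_nonneg hv h

lemma Iio_subset_interior_integrableExpSet [IsFiniteMeasure P] (hX : AEMeasurable X P)
    (hnn : ∀ᵐ ω ∂P, 0 ≤ X ω) : Iio 0 ⊆ interior (integrableExpSet X P) := by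
  rw [← interior_Iic]
  exact interior_mono fun v hv => integrable_exp_mul_of_nonpos hX hnn hv

lemma mgf_le_one_of_nonpos [IsProbabilityMeasure P] (hnn : ∀ᵐ ω ∂P, 0 ≤ X ω) {v : ℝ}
    (hv : v ≤ 0) : mgf X P v ≤ 1 := by
  calc mgf X P v ≤ ∫ _, (1 : ℝ) ∂P := by
        refine integral_mono_of_nonneg (ae_of_all _ fun ω => (exp_pos _).le)
          (integrable_const 1) ?_
        filter_upwards [hnn] with ω h
        exact exp_le_one_iff.2 (mul_nonpos_of_nonpos_of_nonneg hv h)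
    _ = 1 := by simp

lemma continuousOn_mgf_Iic [IsFiniteMeasure P] (hX : AEMeasurable X P)
    (hnn : ∀ᵐ ω ∂P, 0 ≤ X ω) : ContinuousOn (mgf X P) (Iic 0) := by
  refine continuousOn_of_dominated (bound := fun _ => 1)
    (fun v _ => by fun_prop) (fun v hv => ?_) (integrable_const 1)
    (ae_of_all _ fun ω => by fun_prop)
  filter_upwards [hnn] with ω h
  rw [Real.norm_eq_abs, abs_of_pos (exp_pos _), exp_le_one_iff]
  exact mul_nonpos_of_nonpos_of_nonneg hv h

lemma mul_integral_le_cgf [IsProbabilityMeasure P] (hint : Integrable X P) {v : ℝ}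
    (hexp : Integrable (fun ω => exp (v * X ω)) P) : v * P[X] ≤ cgf X P v := by
  have hJensen : exp (∫ ω, v * X ω ∂P) ≤ ∫ ω, exp (v * X ω) ∂P :=
    convexOn_exp.map_integral_le continuous_exp.continuousOn isClosed_univ
      (ae_of_all _ fun _ => mem_univ _) (hint.const_mul v) hexp
  rw [integral_const_mul] at hJensen
  rw [← log_exp (v * P[X])]
  exact log_le_log (exp_pos _) hJensen

lemma integrable_sub_sq_mul_exp_of_mem_interior {v : ℝ}
    (hv : v ∈ interior (integrableExpSet X P)) (d : ℝ) :
    Integrable (fun ω => (X ω - d) ^ 2 * exp (v * X ω)) P := by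
  have h2 := integrable_pow_mul_exp_of_mem_interior_integrableExpSet hv 2
  have h1 := integrable_pow_mul_exp_of_mem_interior_integrableExpSet hv 1
  have h0 : Integrable (fun ω => exp (v * X ω)) P :=
    interior_subset (s := integrableExpSet X P) hv
  refine ((h2.sub (h1.const_mul (2 * d))).add (h0.const_mul (d ^ 2))).congr
    (ae_of_all _ fun ω => ?_)
  simp only [Pi.add_apply, Pi.sub_apply]
  ring

/- `iteratedDeriv 2 (cgf X P) v` is the variance of the law of `X` tilted by `exp (v * X)`;
it is bounded below by the tilted mass that stays `ε` away from the tilted mean. -/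
lemma le_iteratedDeriv_two_cgf [IsProbabilityMeasure P] (hX : Measurable X)
    (hnn : ∀ᵐ ω ∂P, 0 ≤ X ω) {ε M p : ℝ} (hε : 0 ≤ ε) (hM : 0 ≤ M)
    (hspread : ∀ d, p ≤ P.real {ω | ε ≤ |X ω - d| ∧ X ω ≤ M}) {a v : ℝ} (hav : a ≤ v)
    (hv : v < 0) : ε ^ 2 * p * exp (a * M) ≤ iteratedDeriv 2 (cgf X P) v := by
  have hv' : v ∈ interior (integrableExpSet X P) :=
    Iio_subset_interior_integrableExpSet hX.aemeasurable hnn hv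
  rw [iteratedDeriv_two_cgf_eq_integral hv']
  set d := deriv (cgf X P) v
  set S := {ω | ε ≤ |X ω - d| ∧ X ω ≤ M}
  have hS : MeasurableSet S :=
    (measurableSet_le measurable_const ((hX.sub_const d).abs)).inter
      (measurableSet_le hX measurable_const)
  have hS_le : S.indicator (fun _ => ε ^ 2 * exp (a * M)) ≤ᵐ[P]
      fun ω => (X ω - d) ^ 2 * exp (v * X ω) := by
    filter_upwards [hnn] with ω hω
    by_cases hωS : ω ∈ S
    · rw [indicator_of_mem hωS]
      obtain ⟨hfar, hle⟩ := hωS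
      have hsq : ε ^ 2 ≤ (X ω - d) ^ 2 := by
        rw [← sq_abs (X ω - d)]; exact pow_le_pow_left₀ hε hfar 2
      have hexp : exp (a * M) ≤ exp (v * X ω) := exp_le_exp.2 (by nlinarith)
      exact mul_le_mul hsq hexp (exp_pos _).le (sq_nonneg _)
    · rw [indicator_of_notMem hωS]; positivity
  have hmgf_pos : 0 < mgf X P v :=
    mgf_pos (integrable_exp_mul_of_nonpos hX.aemeasurable hnn hv.le)
  calc ε ^ 2 * p * exp (a * M) = p * (ε ^ 2 * exp (a * M)) := by ring
    _ ≤ P.real S • (ε ^ 2 * exp (a * M)) :=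
        mul_le_mul_of_nonneg_right (hspread d) (by positivity)
    _ = ∫ ω, S.indicator (fun _ => ε ^ 2 * exp (a * M)) ω ∂P :=
        (integral_indicator_const _ hS).symm
    _ ≤ ∫ ω, (X ω - d) ^ 2 * exp (v * X ω) ∂P :=
        integral_mono_of_nonneg (ae_of_all _ fun ω => indicator_nonneg (fun _ _ => by positivity) ω)
          (integrable_sub_sq_mul_exp_of_mem_interior hv' d) hS_le
    _ ≤ (∫ ω, (X ω - d) ^ 2 * exp (v * X ω) ∂P) / mgf X P v :=
        le_div_self (integral_nonneg fun ω => by positivity) hmgf_pos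
          (mgf_le_one_of_nonpos hnn hv.le)

lemma strongConvexOn_cgf_Icc [IsProbabilityMeasure P] (hX : Measurable X)
    (hnn : ∀ᵐ ω ∂P, 0 ≤ X ω) {ε M p : ℝ} (hε : 0 ≤ ε) (hM : 0 ≤ M)
    (hspread : ∀ d, p ≤ P.real {ω | ε ≤ |X ω - d| ∧ X ω ≤ M}) (a : ℝ) :
    StrongConvexOn (Icc a 0) (ε ^ 2 * p * exp (a * M)) (cgf X P) := by
  set m := ε ^ 2 * p * exp (a * M)
  rw [strongConvexOn_iff_convex]
  simp only [Real.norm_eq_abs, sq_abs]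
  have hint : ∀ v ∈ Ioo a 0, v ∈ interior (integrableExpSet X P) := fun v hv =>
    Iio_subset_interior_integrableExpSet hX.aemeasurable hnn hv.2
  refine convexOn_of_hasDerivWithinAt2_nonneg (f' := fun v => deriv (cgf X P) v - m * v)
    (f'' := fun v => iteratedDeriv 2 (cgf X P) v - m) (convex_Icc a 0) ?_ ?_ ?_ ?_
  · have hmgf : ContinuousOn (mgf X P) (Icc a 0) :=
      (continuousOn_mgf_Iic hX.aemeasurable hnn).mono fun v hv => hv.2
    refine (hmgf.log fun v hv => ?_).sub (by fun_prop)
    exact (mgf_pos (integrable_exp_mul_of_nonpos hX.aemeasurable hnn hv.2)).ne'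
  · intro v hv
    rw [interior_Icc] at hv ⊢
    have hquad : HasDerivAt (fun v : ℝ => m / 2 * v ^ 2) (m * v) v :=
      ((hasDerivAt_pow 2 v).const_mul (m / 2)).congr_deriv (by norm_num; ring)
    exact ((analyticAt_cgf (hint v hv)).differentiableAt.hasDerivAt.sub hquad).hasDerivWithinAt
  · intro v hv
    rw [interior_Icc] at hv ⊢
    rw [iteratedDeriv_succ, iteratedDeriv_one]
    exact ((analyticAt_cgf (hint v hv)).deriv.differentiableAt.hasDerivAt.sub
      ((hasDerivAt_id v).const_mul m |>.congr_deriv (mul_one m))).hasDerivWithinAt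
  · intro v hv
    rw [interior_Icc] at hv
    exact sub_nonneg.2 (le_iteratedDeriv_two_cgf hX hnn hε hM hspread hv.1.le hv.2)

lemma mgf_pow_add_le_prod_mgf [IsProbabilityMeasure P] (hX : Measurable X)
    (hnn : ∀ᵐ ω ∂P, 0 ≤ X ω) (hint : Integrable X P) {ε M p : ℝ} (hε : 0 ≤ ε) (hM : 0 ≤ M)
    (hp : 0 ≤ p) (hspread : ∀ d, p ≤ P.real {ω | ε ≤ |X ω - d| ∧ X ω ≤ M})
    {ι : Type*} [Fintype ι] [Nonempty ι] {b : ι → ℝ} (hb : ∀ i, 0 ≤ b i) (hsum : ∑ i, b i = 1)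
    {v : ℝ} (hv : v ≤ 0) :
    mgf X P (v / Fintype.card ι) ^ Fintype.card ι
        + ε ^ 2 * p / 2 * v ^ 2 * exp ((P[X] + M) * v) * ∑ i, (b i - 1 / Fintype.card ι) ^ 2
      ≤ ∏ i, mgf X P (b i * v) := by
  have hexp_int : ∀ {u : ℝ}, u ≤ 0 → Integrable (fun ω => exp (u * X ω)) P :=
    integrable_exp_mul_of_nonpos hX.aemeasurable hnn
  have hmem : ∀ i, b i * v ∈ Icc v 0 := fun i => by
    have hb1 : b i ≤ 1 := hsum ▸ Finset.single_le_sum (fun j _ => hb j) (Finset.mem_univ i)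
    constructor <;> nlinarith [hb i]
  have hJensen :=
    (strongConvexOn_cgf_Icc hX hnn hε hM hspread v).card_mul_map_mean_add_le_sum hmem
  set N : ℝ := (Fintype.card ι : ℝ)
  have hN : 0 < N := Nat.cast_pos.2 Fintype.card_pos
  set D := ∑ i, (b i - 1 / N) ^ 2
  have hmean : (∑ i, b i * v) / N = v / N := by rw [← Finset.sum_mul, hsum, one_mul]
  have hvar : ∑ i, (b i * v - v / N) ^ 2 = v ^ 2 * D := by
    rw [Finset.mul_sum]
    exact Finset.sum_congr rfl fun i _ => by ring
  rw [hmean, hvar] at hJensen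
  have hcgf_mean : v * P[X] ≤ N * cgf X P (v / N) := by
    have := mul_integral_le_cgf hint (hexp_int (div_nonpos_of_nonpos_of_nonneg hv hN.le))
    rw [div_mul_eq_mul_div, div_le_iff₀ hN] at this
    linarith
  set K := N * cgf X P (v / N)
  set δ := ε ^ 2 * p * exp (v * M) / 2 * (v ^ 2 * D)
  have hpow : mgf X P (v / N) ^ Fintype.card ι = exp K := by
    rw [exp_nat_mul, exp_cgf (hexp_int (div_nonpos_of_nonpos_of_nonneg hv hN.le))]
  have hprod : ∏ i, mgf X P (b i * v) = exp (∑ i, cgf X P (b i * v)) := by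
    rw [exp_sum]
    exact Finset.prod_congr rfl fun i _ => (exp_cgf (hexp_int (hmem i).2)).symm
  rw [hpow, hprod]
  calc _ = exp K + exp (v * P[X]) * δ := by
        rw [show (P[X] + M) * v = v * P[X] + v * M by ring, exp_add]; ring
    _ ≤ exp (K + δ) := exp_add_exp_mul_le_exp_add hcgf_mean (by positivity)
    _ ≤ exp (∑ i, cgf X P (b i * v)) := exp_le_exp.2 hJensen

end NonnegLaplace

section NegativeMoments

variable {Ω : Type*} [MeasurableSpace Ω] {P : Measure Ω}

lemma lintegral_ofReal_rpow_neg_mul_Gamma [IsFiniteMeasure P] {W : Ω → ℝ} (hW : Measurable W)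
    (hnn : ∀ᵐ ω ∂P, 0 ≤ W ω) {q : ℝ} (hq : 0 < q) :
    (∫⁻ ω, ENNReal.ofReal (W ω) ^ (-q) ∂P) * ENNReal.ofReal (Gamma q)
      = ∫⁻ t in Ioi 0, ENNReal.ofReal (t ^ (q - 1) * mgf W P (-t)) := by
  rw [← lintegral_mul_const' _ _ ENNReal.ofReal_ne_top]
  calc ∫⁻ ω, ENNReal.ofReal (W ω) ^ (-q) * ENNReal.ofReal (Gamma q) ∂P
      = ∫⁻ ω, (∫⁻ t in Ioi (0 : ℝ), ENNReal.ofReal (t ^ (q - 1) * exp (-(W ω * t)))) ∂P :=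
        lintegral_congr_ae <| by
          filter_upwards [hnn] with ω hω using ofReal_rpow_neg_mul_Gamma hq hω
    _ = ∫⁻ t in Ioi (0 : ℝ), ∫⁻ ω, ENNReal.ofReal (t ^ (q - 1) * exp (-(W ω * t))) ∂P :=
        lintegral_lintegral_swap (by fun_prop)
    _ = ∫⁻ t in Ioi 0, ENNReal.ofReal (t ^ (q - 1) * mgf W P (-t)) := by
        refine setLIntegral_congr_fun measurableSet_Ioi fun t (ht : 0 < t) => ?_
        have hint := (integrable_exp_mul_of_nonpos hW.aemeasurable hnn
          (neg_nonpos.2 ht.le)).const_mul (t ^ (q - 1))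
        rw [mgf, ← integral_const_mul, ofReal_integral_eq_lintegral_ofReal hint
          (ae_of_all _ fun ω => by positivity)]
        simp only [neg_mul, mul_comm t]

lemma lintegral_ofReal_rpow_neg_add_le [IsFiniteMeasure P] {U W : Ω → ℝ} (hU : Measurable U)
    (hUnn : ∀ᵐ ω ∂P, 0 ≤ U ω) (hW : Measurable W) (hWnn : ∀ᵐ ω ∂P, 0 ≤ W ω) {q a β : ℝ}
    (hq : 0 < q) (ha : 0 ≤ a) (hβ : 0 < β)
    (hmgf : ∀ t > 0, mgf U P (-t) + a * t ^ 2 * exp (-(β * t)) ≤ mgf W P (-t)) :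
    ∫⁻ ω, ENNReal.ofReal (U ω) ^ (-q) ∂P
        + ENNReal.ofReal (a * β ^ (-(q + 2)) * Gamma (q + 2) / Gamma q)
      ≤ ∫⁻ ω, ENNReal.ofReal (W ω) ^ (-q) ∂P := by
  have hΓ : 0 < Gamma q := Gamma_pos_of_pos hq
  rw [← ENNReal.mul_le_mul_iff_left (ENNReal.ofReal_pos.2 hΓ).ne' ENNReal.ofReal_ne_top, add_mul,
    ← ENNReal.ofReal_mul (by positivity), div_mul_cancel₀ _ hΓ.ne',
    lintegral_ofReal_rpow_neg_mul_Gamma hU hUnn hq, lintegral_ofReal_rpow_neg_mul_Gamma hW hWnn hq]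
  have hgap : ENNReal.ofReal (a * β ^ (-(q + 2)) * Gamma (q + 2))
      = ∫⁻ t in Ioi 0, ENNReal.ofReal (a * (t ^ (q + 1) * exp (-(β * t)))) := by
    rw [ENNReal.ofReal_mul' (Gamma_pos_of_pos (by linarith)).le, ENNReal.ofReal_mul ha,
      ← ENNReal.ofReal_rpow_of_pos hβ, mul_assoc, ofReal_rpow_neg_mul_Gamma (by linarith) hβ.le,
      ← lintegral_const_mul' _ _ ENNReal.ofReal_ne_top]
    refine setLIntegral_congr_fun measurableSet_Ioi fun t (ht : 0 < t) => ?_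
    rw [← ENNReal.ofReal_mul ha]
    ring_nf
  rw [hgap, ← lintegral_add_right' _ (by fun_prop)]
  refine setLIntegral_mono' measurableSet_Ioi fun t (ht : 0 < t) => ?_
  rw [← ENNReal.ofReal_add (mul_nonneg (by positivity) mgf_nonneg) (by positivity)]
  refine ENNReal.ofReal_le_ofReal ?_
  have hpow : t ^ (q + 1) = t ^ (q - 1) * t ^ 2 := by
    rw [← rpow_natCast, ← rpow_add ht]; norm_num; ring_nf
  rw [hpow]
  nlinarith [mul_le_mul_of_nonneg_left (hmgf t ht) (rpow_nonneg ht.le (q - 1))]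

lemma mgf_sum_div_add_le_mgf_sum_mul [IsProbabilityMeasure P] {Y : ℕ → Ω → ℝ}
    (hYm : ∀ i, Measurable (Y i)) (hindep : iIndepFun Y P)
    (hident : ∀ i, P.map (Y i) = P.map (Y 0)) (hYnn : ∀ᵐ ω ∂P, 0 ≤ Y 0 ω)
    (hYint : Integrable (Y 0) P) {ε M p : ℝ} (hε : 0 ≤ ε) (hM : 0 ≤ M) (hp : 0 ≤ p)
    (hspread : ∀ d, p ≤ P.real {ω | ε ≤ |Y 0 ω - d| ∧ Y 0 ω ≤ M}) {n : ℕ} (hn : 0 < n)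
    {b : Fin n → ℝ} (hb : ∀ j, 0 ≤ b j) (hsum : ∑ j, b j = 1) {t : ℝ} (ht : 0 ≤ t) :
    mgf (fun ω => ∑ j : Fin n, Y j ω / n) P (-t)
        + ε ^ 2 * p / 2 * (∑ j, (b j - 1 / n) ^ 2) * t ^ 2 * exp (-((P[Y 0] + M) * t))
      ≤ mgf (fun ω => ∑ j : Fin n, b j * Y j ω) P (-t) := by
  have : Nonempty (Fin n) := Fin.pos_iff_nonempty.1 hn
  have hmgf : ∀ (a : Fin n → ℝ) t,
      mgf (fun ω => ∑ j, a j * Y j ω) P t = ∏ j, mgf (Y 0) P (a j * t) := fun a t => by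
    rw [(iIndepFun.precomp Fin.val_injective hindep).mgf_sum_mul (fun j => hYm j) a]
    exact Finset.prod_congr rfl fun j _ =>
      by rw [mgf_congr_identDistrib ⟨(hYm j).aemeasurable, (hYm 0).aemeasurable, hident j⟩]
  have hmean : (fun ω => ∑ j : Fin n, Y j ω / n) = fun ω => ∑ j : Fin n, (n : ℝ)⁻¹ * Y j ω := by
    simp only [div_eq_inv_mul]
  have key := mgf_pow_add_le_prod_mgf (hYm 0) hYnn hYint hε hM hp hspread hb hsum
    (neg_nonpos.2 ht)
  simp only [Fintype.card_fin] at key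
  rw [hmean, hmgf, hmgf, Finset.prod_const, Finset.card_univ, Fintype.card_fin,
    show (n : ℝ)⁻¹ * -t = -t / n by ring]
  calc _ = mgf (Y 0) P (-t / n) ^ n
          + ε ^ 2 * p / 2 * (-t) ^ 2 * exp ((P[Y 0] + M) * -t) * ∑ j, (b j - 1 / n) ^ 2 := by
        ring_nf
    _ ≤ _ := key

end NegativeMoments

theorem stmt_15
    {Ω : Type*} [MeasurableSpace Ω] (P : Measure Ω) [IsProbabilityMeasure P]
    (q : ℝ) (hq : 0 < q)
    (Y : ℕ → Ω → ℝ) (hYm : ∀ i, Measurable (Y i))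
    (hindep : ProbabilityTheory.iIndepFun Y P)
    (hident : ∀ i, Measure.map (Y i) P = Measure.map (Y 0) P)
    (hYnn : ∀ᵐ ω ∂P, 0 ≤ Y 0 ω)
    (hYnc : ¬ ∃ c : ℝ, ∀ᵐ ω ∂P, Y 0 ω = c)
    (hYint : Integrable (Y 0) P) :
    ∃ c : ℝ, 0 < c ∧ ∀ n : ℕ, 0 < n → ∀ b : Fin n → ℝ,
      (∀ j, 0 ≤ b j) → ∑ j, b j = 1 →
      ∫⁻ ω, (ENNReal.ofReal (∑ j : Fin n, b j * Y j ω)) ^ (-q) ∂P ≥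
        ∫⁻ ω, (ENNReal.ofReal (∑ j : Fin n, Y j ω / n)) ^ (-q) ∂P +
          ENNReal.ofReal (c * ∑ j, (b j - 1 / n) ^ 2) := by
  have hYnn' : ∀ᵐ ω ∂P, ∀ j, 0 ≤ Y j ω := ae_all_iff.2 fun j =>
    IdentDistrib.ae_snd ⟨(hYm 0).aemeasurable, (hYm j).aemeasurable, (hident j).symm⟩
      measurableSet_Ici hYnn
  obtain ⟨ε, M, p, hε, hM, hp, hspread⟩ := exists_forall_le_measureReal_abs_sub_ge (hYm 0) hYnc
  set β := P[Y 0] + M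
  have hβ : 0 < β := add_pos_of_nonneg_of_pos (integral_nonneg_of_ae hYnn) hM
  refine ⟨ε ^ 2 * p / 2 * β ^ (-(q + 2)) * Gamma (q + 2) / Gamma q,
    div_pos (mul_pos (by positivity) (Gamma_pos_of_pos (by linarith))) (Gamma_pos_of_pos hq),
    fun n hn b hb hsum => ?_⟩
  have key := lintegral_ofReal_rpow_neg_add_le (U := fun ω => ∑ j : Fin n, Y j ω / n)
    (W := fun ω => ∑ j : Fin n, b j * Y j ω) (by fun_prop)
    (by filter_upwards [hYnn'] with ω hω using
      Finset.sum_nonneg fun j _ => div_nonneg (hω j) n.cast_nonneg)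
    (by fun_prop)
    (by filter_upwards [hYnn'] with ω hω using
      Finset.sum_nonneg fun j _ => mul_nonneg (hb j) (hω j))
    hq (by positivity) hβ fun t ht =>
      mgf_sum_div_add_le_mgf_sum_mul hYm hindep hident hYnn hYint hε.le hM.le hp.le hspread hn
        hb hsum ht.le
  convert key using 3
  ring
end

section
/- Let 2 < p < ∞ and β_p = 2Γ(1+1/p). For every u₀ > 0 there exists c > 0 depending only on p and u₀ such that for all 0 < u < u₀, (1+u)^{1/2}·∫_ℝ exp(-β_p^p·u^{p/2}·|x|^p - πx²) dx ≥ 1 + c·u. -/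
/-!
Write `β = 2 Γ(1 + 1/p)` and `I(u) = ∫ exp (-β^p u^{p/2} |x|^p - π x²) dx`. The choice of `β`
makes the profiles `exp (-β^p u^{p/2} |x|^p)` and `exp (-π u x²)` have the same mass `u^{-1/2}`.
Since `p > 2` their difference changes sign exactly once, at some `|x| = x₀`, being positive
inside; pairing it with the weight `exp (-π x²) - exp (-π x₀²)`, which has the same sign pattern,
shows `I(u) > ∫ exp (-π (1 + u) x²) dx = (1 + u)^{-1/2}`, so `φ(u) = (1 + u)^{1/2} I(u) - 1 > 0`
for all `u > 0`. Near `u = 0`, `e^{-y} ≥ 1 - y` gives `I(u) ≥ 1 - O(u^{p/2}) = 1 - o(u)`, hence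
`φ(u) ≥ u / 6` for small `u`; on the remaining compact range the continuous positive `φ` is
bounded below.
-/

open MeasureTheory Real Set Filter Topology

/-- The Laplace transform at `A` of `|x| ^ p` under the Gaussian probability density
`exp (-π x²)`. -/
noncomputable def gaussLaplace (p A : ℝ) : ℝ := ∫ x : ℝ, exp (-A * |x| ^ p - π * x ^ 2)

section Integrability

variable {p A : ℝ}

lemma exp_neg_mul_abs_rpow_sub_le (hA : 0 ≤ A) (x : ℝ) :
    exp (-A * |x| ^ p - π * x ^ 2) ≤ exp (-π * x ^ 2) := by
  have : 0 ≤ A * |x| ^ p := by positivity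
  rw [exp_le_exp]
  linarith

lemma continuous_exp_neg_mul_abs_rpow_sub (hp : 0 ≤ p) :
    Continuous fun x : ℝ => exp (-A * |x| ^ p - π * x ^ 2) := by
  fun_prop (disch := exact Or.inr hp)

lemma integrable_exp_neg_mul_abs_rpow_sub (hp : 0 ≤ p) (hA : 0 ≤ A) :
    Integrable fun x : ℝ => exp (-A * |x| ^ p - π * x ^ 2) :=
  (integrable_exp_neg_mul_sq pi_pos).mono'
    (continuous_exp_neg_mul_abs_rpow_sub hp).aestronglyMeasurable
    (.of_forall fun x => by
      rw [norm_of_nonneg (exp_pos _).le]; exact exp_neg_mul_abs_rpow_sub_le hA x)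

lemma integral_exp_neg_mul_abs_rpow (hp : 0 < p) (hA : 0 < A) :
    ∫ x : ℝ, exp (-A * |x| ^ p) = 2 * Gamma (1 / p + 1) * A ^ (-1 / p) := by
  rw [integral_comp_abs (f := fun t => exp (-A * t ^ p)), integral_exp_neg_mul_rpow hp hA]
  ring

lemma integrable_exp_neg_mul_abs_rpow (hp : 0 < p) (hA : 0 < A) :
    Integrable fun x : ℝ => exp (-A * |x| ^ p) :=
  .of_integral_ne_zero <| by rw [integral_exp_neg_mul_abs_rpow hp hA]; positivity

lemma integrable_abs_rpow_mul_exp_neg_mul_sq {b : ℝ} (hb : 0 < b) {s : ℝ} (hs : -1 < s) :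
    Integrable fun x : ℝ => |x| ^ s * exp (-b * x ^ 2) := by
  refine .of_integral_ne_zero ?_
  have h := integral_rpow_mul_exp_neg_mul_rpow two_pos hs hb
  simp only [rpow_two] at h
  have : 0 < Gamma ((s + 1) / 2) := Gamma_pos_of_pos (by linarith)
  have e := integral_comp_abs (f := fun t => t ^ s * exp (-b * t ^ 2))
  simp only [sq_abs] at e
  rw [e, h]
  positivity

end Integrability

lemma continuousOn_gaussLaplace {p : ℝ} (hp : 0 ≤ p) : ContinuousOn (gaussLaplace p) (Ici 0) := by
  refine continuousOn_of_dominated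
    (fun A _ => (continuous_exp_neg_mul_abs_rpow_sub hp).aestronglyMeasurable)
    (fun A hA => .of_forall fun x => ?_) (integrable_exp_neg_mul_sq pi_pos)
    (.of_forall fun x => by fun_prop)
  rw [norm_of_nonneg (exp_pos _).le]
  exact exp_neg_mul_abs_rpow_sub_le hA x

lemma one_sub_mul_le_gaussLaplace {p A : ℝ} (hp : 0 < p) (hA : 0 ≤ A) :
    1 - A * ∫ x : ℝ, |x| ^ p * exp (-π * x ^ 2) ≤ gaussLaplace p A := by
  have hM := integrable_abs_rpow_mul_exp_neg_mul_sq pi_pos (s := p) (by linarith)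
  have hγ : ∫ x : ℝ, exp (-π * x ^ 2) = 1 := by
    rw [integral_gaussian, div_self pi_ne_zero, sqrt_one]
  rw [← hγ, ← integral_const_mul,
    ← integral_sub (integrable_exp_neg_mul_sq pi_pos) (hM.const_mul A)]
  refine integral_mono ((integrable_exp_neg_mul_sq pi_pos).sub (hM.const_mul A))
    (integrable_exp_neg_mul_abs_rpow_sub hp.le hA) fun x => ?_
  calc exp (-π * x ^ 2) - A * (|x| ^ p * exp (-π * x ^ 2))
      = (-A * |x| ^ p + 1) * exp (-π * x ^ 2) := by ring
    _ ≤ exp (-A * |x| ^ p) * exp (-π * x ^ 2) := by gcongr; exact add_one_le_exp _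
    _ = exp (-A * |x| ^ p - π * x ^ 2) := by rw [← exp_add]; ring_nf

section Crossing

variable {p A x₀ : ℝ}

lemma rpow_eq_rpow_sub_two_mul_sq {t : ℝ} (ht : 0 < t) (p : ℝ) : t ^ p = t ^ (p - 2) * t ^ 2 := by
  rw [← rpow_natCast, ← rpow_add ht]
  norm_num

lemma mul_rpow_lt_mul_sq_iff (hp : 2 < p) (hA : 0 < A) (hx₀ : 0 < x₀) {t : ℝ} (ht : 0 < t) :
    A * t ^ p < A * x₀ ^ (p - 2) * t ^ 2 ↔ t < x₀ := by
  rw [rpow_eq_rpow_sub_two_mul_sq ht, ← mul_assoc, mul_lt_mul_iff_left₀ (by positivity),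
    mul_lt_mul_iff_right₀ hA, rpow_lt_rpow_iff ht.le hx₀.le (by linarith)]

lemma mul_rpow_le_mul_sq_iff (hp : 2 < p) (hA : 0 < A) (hx₀ : 0 < x₀) {t : ℝ} (ht : 0 ≤ t) :
    A * t ^ p ≤ A * x₀ ^ (p - 2) * t ^ 2 ↔ t ≤ x₀ := by
  rcases ht.eq_or_lt with rfl | ht
  · simp [zero_rpow (by linarith : p ≠ 0), hx₀.le]
  rw [rpow_eq_rpow_sub_two_mul_sq ht, ← mul_assoc, mul_le_mul_iff_left₀ (by positivity),
    mul_le_mul_iff_right₀ hA, rpow_le_rpow_iff ht.le hx₀.le (by linarith)]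

lemma exp_sub_exp_nonneg_iff (hp : 2 < p) (hA : 0 < A) (hx₀ : 0 < x₀) (x : ℝ) :
    0 ≤ exp (-A * |x| ^ p) - exp (-(A * x₀ ^ (p - 2)) * x ^ 2) ↔ |x| ≤ x₀ := by
  rw [sub_nonneg, exp_le_exp, ← sq_abs x, neg_mul, neg_mul, neg_le_neg_iff,
    mul_rpow_le_mul_sq_iff hp hA hx₀ (abs_nonneg x)]

lemma exp_sub_exp_pos (hp : 2 < p) (hA : 0 < A) {x : ℝ} (hx : x ∈ Ioo 0 x₀) :
    0 < exp (-A * x ^ p) - exp (-(A * x₀ ^ (p - 2)) * x ^ 2) := by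
  rw [sub_pos, exp_lt_exp, neg_mul, neg_mul, neg_lt_neg_iff,
    mul_rpow_lt_mul_sq_iff hp hA (hx.1.trans hx.2) hx.1]
  exact hx.2

lemma exp_neg_pi_mul_sq_sub_nonneg_iff (hx₀ : 0 ≤ x₀) (x : ℝ) :
    0 ≤ exp (-π * x ^ 2) - exp (-π * x₀ ^ 2) ↔ |x| ≤ x₀ := by
  rw [sub_nonneg, exp_le_exp, neg_mul, neg_mul, neg_le_neg_iff, mul_le_mul_iff_right₀ pi_pos,
    sq_le_sq, abs_of_nonneg hx₀]

end Crossing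

lemma mul_nonneg_of_nonneg_iff {a b : ℝ} (h : 0 ≤ a ↔ 0 ≤ b) : 0 ≤ a * b := by
  by_cases ha : 0 ≤ a
  · exact mul_nonneg ha (h.1 ha)
  · exact (mul_pos_of_neg_of_neg (not_le.1 ha) (not_le.1 (mt h.2 ha))).le

lemma integral_mul_pos_of_integral_eq_zero {h w : ℝ → ℝ} {c a b : ℝ} (hab : a < b)
    (hh : Integrable h) (hhw : Integrable fun x => h x * w x) (h₀ : ∫ x, h x = 0)
    (hsign : ∀ x, 0 ≤ h x * (w x - c)) (hpos : ∀ x ∈ Ioo a b, 0 < h x * (w x - c)) :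
    0 < ∫ x, h x * w x := by
  have hint : Integrable fun x => h x * (w x - c) := by
    simp only [mul_sub]
    exact hhw.sub (hh.mul_const c)
  have heq : ∫ x, h x * w x = ∫ x, h x * (w x - c) := by
    simp only [mul_sub]
    rw [integral_sub hhw (hh.mul_const c), integral_mul_const, h₀, zero_mul, sub_zero]
  rw [heq, integral_pos_iff_support_of_nonneg hsign hint]
  calc (0 : ENNReal) < volume (Ioo a b) := by simpa using hab
    _ ≤ _ := measure_mono fun x hx => (hpos x hx).ne'

lemma integral_exp_neg_mul_sq_lt_gaussLaplace {p A B : ℝ} (hp : 2 < p) (hA : 0 < A) (hB : 0 < B)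
    (heq : ∫ x : ℝ, exp (-A * |x| ^ p) = ∫ x : ℝ, exp (-B * x ^ 2)) :
    ∫ x : ℝ, exp (-(B + π) * x ^ 2) < gaussLaplace p A := by
  -- `x₀` is where the profiles `exp (-A * |x| ^ p)` and `exp (-B * x ^ 2)` cross
  obtain ⟨x₀, hx₀, rfl⟩ : ∃ x₀ : ℝ, 0 < x₀ ∧ B = A * x₀ ^ (p - 2) :=
    ⟨(B / A) ^ (p - 2)⁻¹, by positivity,
      by rw [rpow_inv_rpow (by positivity) (by linarith), mul_div_cancel₀ _ hA.ne']⟩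
  set h : ℝ → ℝ := fun x => exp (-A * |x| ^ p) - exp (-(A * x₀ ^ (p - 2)) * x ^ 2)
  have hh : Integrable h :=
    (integrable_exp_neg_mul_abs_rpow (by linarith) hA).sub (integrable_exp_neg_mul_sq hB)
  have hsplit : ∀ x, h x * exp (-π * x ^ 2) =
      exp (-A * |x| ^ p - π * x ^ 2) - exp (-(A * x₀ ^ (p - 2) + π) * x ^ 2) := fun x => by
    simp only [h, sub_mul, ← exp_add]
    ring_nf
  have hint := integrable_exp_neg_mul_abs_rpow_sub (by linarith : 0 ≤ p) hA.le
  have hgauss := integrable_exp_neg_mul_sq (by positivity : 0 < A * x₀ ^ (p - 2) + π)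
  have hhw : Integrable fun x => h x * exp (-π * x ^ 2) := by
    simp_rw [hsplit]
    exact hint.sub hgauss
  have hh₀ : ∫ x, h x = 0 := by
    rw [integral_sub (integrable_exp_neg_mul_abs_rpow (by linarith) hA)
      (integrable_exp_neg_mul_sq hB), heq, sub_self]
  have hpos := integral_mul_pos_of_integral_eq_zero (c := exp (-π * x₀ ^ 2)) hx₀ hh hhw hh₀
    (fun x => ?_) (fun x hx => ?_)
  · simp_rw [hsplit] at hpos
    rw [integral_sub hint hgauss] at hpos
    exact sub_pos.1 hpos
  · exact mul_nonneg_of_nonneg_iff <| (exp_sub_exp_nonneg_iff hp hA hx₀ x).trans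
      (exp_neg_pi_mul_sq_sub_nonneg_iff hx₀.le x).symm
  · refine mul_pos ?_ ?_
    · simpa only [h, abs_of_pos hx.1] using exp_sub_exp_pos hp hA hx
    · rw [sub_pos, exp_lt_exp, neg_mul, neg_mul, neg_lt_neg_iff, mul_lt_mul_iff_right₀ pi_pos]
      exact pow_lt_pow_left₀ hx.2 hx.1.le two_ne_zero

lemma integral_exp_neg_mul_abs_rpow_eq_gaussian {p u : ℝ} (hp : 0 < p) (hu : 0 < u) :
    ∫ x : ℝ, exp (-((2 * Gamma (1 + 1 / p)) ^ p * u ^ (p / 2)) * |x| ^ p) =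
      ∫ x : ℝ, exp (-(π * u) * x ^ 2) := by
  have hβ : 0 < 2 * Gamma (1 + 1 / p) := by positivity
  rw [integral_exp_neg_mul_abs_rpow hp (by positivity), integral_gaussian,
    mul_rpow (by positivity) (by positivity), ← rpow_mul hβ.le, ← rpow_mul hu.le,
    div_mul_cancel_left₀ pi_ne_zero, sqrt_inv, sqrt_eq_rpow, add_comm (1 / p),
    show p * (-1 / p) = -1 by field_simp, show p / 2 * (-1 / p) = -(1 / 2) by field_simp,
    rpow_neg_one, rpow_neg hu.le]
  field_simp

lemma one_lt_sqrt_mul_gaussLaplace {p u : ℝ} (hp : 2 < p) (hu : 0 < u) :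
    1 < (1 + u) ^ (1 / 2 : ℝ) * gaussLaplace p ((2 * Gamma (1 + 1 / p)) ^ p * u ^ (p / 2)) := by
  have hlt := integral_exp_neg_mul_sq_lt_gaussLaplace hp (by positivity) (by positivity)
    (integral_exp_neg_mul_abs_rpow_eq_gaussian (by linarith) hu)
  rw [integral_gaussian, show π / (π * u + π) = (1 + u)⁻¹ by field_simp; ring, sqrt_inv,
    sqrt_eq_rpow, inv_lt_iff_one_lt_mul₀' (by positivity)] at hlt
  exact hlt

lemma one_add_div_three_le_sqrt_one_add {u : ℝ} (hu : 0 ≤ u) (hu3 : u ≤ 3) :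
    1 + u / 3 ≤ (1 + u) ^ (1 / 2 : ℝ) := by
  rw [← sqrt_eq_rpow, le_sqrt (by positivity) (by linarith)]
  nlinarith

lemma eventually_mul_le_sqrt_mul_sub_one {p K : ℝ} (hp : 2 < p) {J : ℝ → ℝ}
    (hJ : ∀ u > 0, 1 - K * u ^ (p / 2) ≤ J u) :
    ∀ᶠ u in 𝓝[>] 0, 6⁻¹ * u ≤ (1 + u) ^ (1 / 2 : ℝ) * J u - 1 := by
  have hsmall : Tendsto (fun u : ℝ => K * u ^ (p / 2 - 1)) (𝓝[>] 0) (𝓝 0) := by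
    have := ((continuous_rpow_const (by linarith : 0 ≤ p / 2 - 1)).tendsto 0).const_mul K
    rw [zero_rpow (by linarith), mul_zero] at this
    exact this.mono_left nhdsWithin_le_nhds
  filter_upwards [Ioo_mem_nhdsGT (by norm_num : (0 : ℝ) < 3),
    hsmall.eventually (eventually_lt_nhds (by norm_num : (0 : ℝ) < 12⁻¹))] with u ⟨hu, hu3⟩ hK
  have hE : K * u ^ (p / 2) ≤ u / 12 := by
    rw [show u ^ (p / 2) = u ^ (p / 2 - 1) * u by rw [← rpow_add_one hu.ne']; ring_nf]
    nlinarith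
  have hsqrt := one_add_div_three_le_sqrt_one_add hu.le hu3.le
  calc 6⁻¹ * u ≤ (1 + u / 3) * (1 - u / 12) - 1 := by nlinarith
    _ ≤ (1 + u) ^ (1 / 2 : ℝ) * (1 - K * u ^ (p / 2)) - 1 := by gcongr; linarith
    _ ≤ (1 + u) ^ (1 / 2 : ℝ) * J u - 1 := by gcongr; exact hJ u hu

lemma exists_pos_mul_le_of_eventually {φ : ℝ → ℝ} {a : ℝ} (ha : 0 < a)
    (hcont : ContinuousOn φ (Ioi 0)) (hpos : ∀ u > 0, 0 < φ u)
    (hnear : ∀ᶠ u in 𝓝[>] 0, a * u ≤ φ u) (u₀ : ℝ) :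
    ∃ c > 0, ∀ u ∈ Ioc 0 u₀, c * u ≤ φ u := by
  obtain ⟨δ, (hδ : 0 < δ), hδφ⟩ := mem_nhdsGT_iff_exists_Ioo_subset.1 hnear
  set M := max δ u₀
  have hM : 0 < M := lt_max_of_lt_left hδ
  obtain ⟨v, hv, hvmin⟩ := isCompact_Icc.exists_isMinOn (nonempty_Icc.2 (le_max_left δ u₀))
    (hcont.mono fun u hu => hδ.trans_le hu.1)
  have hφv : 0 < φ v := hpos v (hδ.trans_le hv.1)
  refine ⟨min a (φ v / M), lt_min ha (by positivity), fun u ⟨hu, huu₀⟩ => ?_⟩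
  rcases lt_or_ge u δ with hlt | hge
  · calc min a (φ v / M) * u ≤ a * u := by gcongr; exact min_le_left _ _
      _ ≤ φ u := hδφ ⟨hu, hlt⟩
  · calc min a (φ v / M) * u ≤ φ v / M * M := by
          gcongr
          · exact min_le_right _ _
          · exact huu₀.trans (le_max_right _ _)
      _ = φ v := div_mul_cancel₀ _ hM.ne'
      _ ≤ φ u := hvmin ⟨hge, huu₀.trans (le_max_right _ _)⟩

theorem stmt_16_general (p : ℝ) (hp : 2 < p) (u₀ : ℝ) :
    ∃ c : ℝ, 0 < c ∧ ∀ u : ℝ, 0 < u → u < u₀ →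
      (1 + u) ^ ((1 : ℝ) / 2) *
        ∫ x : ℝ, Real.exp (-(2 * Real.Gamma (1 + 1 / p)) ^ p * u ^ (p / 2) * |x| ^ p
          - π * x ^ 2) ≥ 1 + c * u := by
  set β := 2 * Gamma (1 + 1 / p)
  set φ : ℝ → ℝ := fun u => (1 + u) ^ (1 / 2 : ℝ) * gaussLaplace p (β ^ p * u ^ (p / 2)) - 1
  have hφ : ContinuousOn φ (Ioi 0) := by
    refine (ContinuousOn.mul ?_ ?_).sub continuousOn_const
    · exact (continuous_rpow_const (by norm_num)).comp_continuousOn (by fun_prop)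
    · refine (continuousOn_gaussLaplace (by linarith)).comp
        (Continuous.continuousOn (by fun_prop (disch := intros; positivity)))
        fun u (hu : 0 < u) => mem_Ici.2 (by positivity)
  have hlow (u : ℝ) (hu : 0 < u) :
      1 - β ^ p * (∫ x : ℝ, |x| ^ p * exp (-π * x ^ 2)) * u ^ (p / 2) ≤
        gaussLaplace p (β ^ p * u ^ (p / 2)) := by
    have := one_sub_mul_le_gaussLaplace (p := p) (by linarith)
      (by positivity : 0 ≤ β ^ p * u ^ (p / 2))
    linarith
  obtain ⟨c, hc, hcu⟩ := exists_pos_mul_le_of_eventually (by norm_num : (0 : ℝ) < 6⁻¹) hφ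
    (fun u hu => sub_pos.2 (one_lt_sqrt_mul_gaussLaplace hp hu))
    (eventually_mul_le_sqrt_mul_sub_one hp hlow) u₀
  refine ⟨c, hc, fun u hu huu₀ => ?_⟩
  have := hcu u ⟨hu, huu₀.le⟩
  simp only [φ, gaussLaplace, neg_mul] at this ⊢
  linarith

theorem stmt_16 (p : ℝ) (hp : 2 < p) (u₀ : ℝ) (hu₀ : 0 < u₀) :
    ∃ c : ℝ, 0 < c ∧ ∀ u : ℝ, 0 < u → u < u₀ →
      (1 + u) ^ ((1 : ℝ) / 2) *
        ∫ x : ℝ, Real.exp (-(2 * Real.Gamma (1 + 1 / p)) ^ p * u ^ (p / 2) * |x| ^ p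
          - π * x ^ 2) ≥ 1 + c * u :=
  stmt_16_general p hp u₀
end
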